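/- arXiv:2210.16974 — 5 statements merged into one kernel-verified Lean document; each statement's English description precedes it below -/
import Mathlib

section
/- Let n ≥ 1, let v_1,…,v_m ∈ Sⁿ⁻¹ be pairwise distinct with positive integer weights μ_1,…,μ_m, and let u_1,…,u_k ∈ Sⁿ⁻¹ be pairwise distinct with k = μ_1 + … + μ_m; set μ = ∑ μ_i δ_{v_i} and λ = ∑ δ_{u_j}, and assume μ is not concentrated on a closed hemisphere. Suppose g ∈ 𝔽 is a solution function, i.e. there exists K ∈ 𝒦ⁿ₀ with μ = λ(K,·) such that for every j the vector u_j lies in the interior, relative to Sⁿ⁻¹, of the normal cone N(K, ρ_K(v_{g(j)})•v_{g(j)}). Then g maximizes the assignment functional: A(f) ≤ A(g) for every f ∈ 𝔽. -/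
open MeasureTheory Set RealInnerProductSpace
open scoped ENNReal

noncomputable section

abbrev Euc (n : ℕ) := EuclideanSpace ℝ (Fin n)

/-- The unit sphere `S^{n-1}` in `ℝ^n`. -/
def uSphere (n : ℕ) : Set (Euc n) := Metric.sphere 0 1

/-- A convex body containing the origin in its interior (`K ∈ 𝒦ⁿ₀`). -/
def IsConvexBody0 {n : ℕ} (K : Set (Euc n)) : Prop :=
  IsCompact K ∧ Convex ℝ K ∧ (0 : Euc n) ∈ interior K

/-- The radial function `ρ_K(u) = sup {t > 0 : t • u ∈ K}`. -/
def radialFn {n : ℕ} (K : Set (Euc n)) (u : Euc n) : ℝ :=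
  sSup {t : ℝ | 0 < t ∧ t • u ∈ K}

/-- The normal cone of unit outer normals at `x`. -/
def normalCone {n : ℕ} (K : Set (Euc n)) (x : Euc n) : Set (Euc n) :=
  {w ∈ uSphere n | ∀ y ∈ K, ⟪y - x, w⟫ ≤ 0}

/-- The radial Gauss image `α_K(ω)`. -/
def gaussImage {n : ℕ} (K ω : Set (Euc n)) : Set (Euc n) :=
  ⋃ u ∈ ω, normalCone K (radialFn K u • u)

/-- The relation `μ = λ(K, ·)`: `λ(α_K(ω)) = μ(ω)` for every Borel `ω ⊆ S^{n-1}`,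
`λ` being applied as an outer measure. -/
def GaussRel {n : ℕ} (K : Set (Euc n)) (lam mu : Measure (Euc n)) : Prop :=
  ∀ ω : Set (Euc n), ω ⊆ uSphere n → MeasurableSet ω →
    lam (gaussImage K ω) = mu ω

/-- The cone generated by `ω`: `{t • u : t ≥ 0, u ∈ ω}`. -/
def coneOf {n : ℕ} (ω : Set (Euc n)) : Set (Euc n) :=
  {x | ∃ t : ℝ, 0 ≤ t ∧ ∃ u ∈ ω, x = t • u}

/-- `ω ⊆ S^{n-1}` is spherically convex. -/
def SphConvex {n : ℕ} (ω : Set (Euc n)) : Prop :=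
  ω ⊆ uSphere n ∧ (coneOf ω).Nonempty ∧ Convex ℝ (coneOf ω) ∧ coneOf ω ≠ univ

/-- The polar set `ω*`. -/
def polarSet {n : ℕ} (ω : Set (Euc n)) : Set (Euc n) :=
  {w ∈ uSphere n | ∀ u ∈ ω, ⟪u, w⟫ ≤ 0}

/-- The outer parallel set `ω_β`. -/
def outerPar {n : ℕ} (ω : Set (Euc n)) (β : ℝ) : Set (Euc n) :=
  {w ∈ uSphere n | ∃ u ∈ ω, Real.cos β < ⟪u, w⟫}

/-- `μ` and `λ` are weak Aleksandrov related. -/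
def WeakAleks {n : ℕ} (mu lam : Measure (Euc n)) : Prop :=
  mu (uSphere n) = lam (uSphere n) ∧
  ∀ ω : Set (Euc n), IsCompact ω → SphConvex ω →
    mu ω + lam (polarSet ω) ≤ mu (uSphere n)

/-- `log : ℝ → EReal` with `log x = -∞` for `x ≤ 0`. -/
def elog (x : ℝ) : EReal := if x ≤ 0 then ⊥ else ((Real.log x : ℝ) : EReal)

/-- Assignment functions `𝔽`: each fiber `f⁻¹(i)` has cardinality `μ_i`. -/
def IsAssign {k m : ℕ} (μw : Fin m → ℕ) (f : Fin k → Fin m) : Prop :=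
  ∀ i : Fin m, (Finset.univ.filter fun j => f j = i).card = μw i

/-- The assignment functional `A(f) = ∑_j log ⟨u_j, v_{f(j)}⟩`, valued in `EReal`. -/
def assignA {n k m : ℕ} (u : Fin k → Euc n) (v : Fin m → Euc n) (f : Fin k → Fin m) : EReal :=
  ∑ j : Fin k, elog ⟪u j, v (f j)⟫

/-- Interior of `s` relative to the unit sphere. -/
def sphInterior {n : ℕ} (s : Set (Euc n)) : Set (Euc n) :=
  {x ∈ uSphere n | ∃ ε > 0, ∀ y ∈ uSphere n, dist y x < ε → y ∈ s}

/-- `μ = ∑ μ_i δ_{v_i}` is not concentrated on a closed hemisphere. -/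
def NotHemisphere {n m : ℕ} (v : Fin m → Euc n) : Prop :=
  ¬ ∃ w ∈ uSphere n, ∀ i : Fin m, ⟪w, v i⟫ ≤ 0

/-- The discrete measure `∑ μ_i δ_{v_i}` with natural number weights. -/
def discMeasN {n m : ℕ} (μw : Fin m → ℕ) (v : Fin m → Euc n) : Measure (Euc n) :=
  ∑ i : Fin m, (μw i : ℝ≥0∞) • Measure.dirac (v i)

/-- The discrete measure `∑ μ_i δ_{v_i}` with positive real weights. -/
def discMeasR {n m : ℕ} (μw : Fin m → ℝ) (v : Fin m → Euc n) : Measure (Euc n) :=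
  ∑ i : Fin m, ENNReal.ofReal (μw i) • Measure.dirac (v i)

/-- The support function `h_K`. -/
def suppFn {n : ℕ} (K : Set (Euc n)) (w : Euc n) : ℝ :=
  sSup ((fun x => ⟪x, w⟫) '' K)

-- radial function: positive and attained
lemma radial_pos_mem {n : ℕ} {K : Set (Euc n)} (hK : IsConvexBody0 K)
    {v : Euc n} (hv : v ∈ uSphere n) :
    0 < radialFn K v ∧ radialFn K v • v ∈ K := by
  obtain ⟨hcomp, hconv, hint⟩ := hK
  have hvn : ‖v‖ = 1 := by simpa [uSphere] using hv
  obtain ⟨r, hr, hball⟩ := Metric.isOpen_iff.1 isOpen_interior 0 hint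
  obtain ⟨R, hR⟩ := hcomp.isBounded.subset_closedBall 0
  have hmem : ∀ t : ℝ, 0 ≤ t → t < r → t • v ∈ K := fun t ht htr =>
    interior_subset (hball (by
      simp only [mem_ball_iff_norm, sub_zero, norm_smul, hvn, mul_one, Real.norm_eq_abs,
        abs_of_nonneg ht]
      exact htr))
  set S : Set ℝ := {t : ℝ | 0 < t ∧ t • v ∈ K} with hS
  have hne : (r/2) ∈ S := ⟨by linarith, hmem _ (by linarith) (by linarith)⟩
  have hbdd : BddAbove S := ⟨R, fun t ht => by
    have := hR ht.2
    simp only [Metric.mem_closedBall, dist_zero_right, norm_smul, hvn, mul_one] at this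
    exact le_trans (le_abs_self t) this⟩
  have hpos : 0 < radialFn K v := lt_of_lt_of_le (by linarith) (le_csSup hbdd hne)
  refine ⟨hpos, ?_⟩
  set S' : Set ℝ := {t : ℝ | 0 ≤ t ∧ t • v ∈ K} with hS'
  have hS'c : IsClosed S' := by
    have : S' = Ici (0:ℝ) ∩ (fun t : ℝ => t • v) ⁻¹' K := by
      ext t; simp only [hS', Set.mem_setOf_eq, Set.mem_inter_iff, Set.mem_Ici,
        Set.mem_preimage]
    rw [this]
    exact isClosed_Ici.inter (hcomp.isClosed.preimage (by continuity))
  have hsub : S' ⊆ insert 0 S := by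
    rintro t ⟨ht, htm⟩
    rcases eq_or_lt_of_le ht with h | h
    · exact Or.inl h.symm
    · exact Or.inr ⟨h, htm⟩
  have hsub2 : insert 0 S ⊆ S' := by
    rintro t (rfl | ⟨ht, htm⟩)
    · exact ⟨le_refl _, by simpa using interior_subset hint⟩
    · exact ⟨ht.le, htm⟩
  have heq : S' = insert 0 S := le_antisymm hsub hsub2
  have : sSup S' = radialFn K v := by
    rw [heq, csSup_insert hbdd ⟨_, hne⟩]
    exact sup_eq_right.2 hpos.le
  have hmem' : sSup S' ∈ S' :=
    hS'c.csSup_mem (⟨0, le_refl _, by simpa using interior_subset hint⟩)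
      (heq ▸ hbdd.insert 0)
  rw [this] at hmem'
  exact hmem'.2

lemma suppFn_bddAbove {n : ℕ} {K : Set (Euc n)} (hc : IsCompact K) (w : Euc n) :
    BddAbove ((fun x => ⟪x, w⟫) '' K) :=
  (hc.image (continuous_id.inner continuous_const)).isBounded.bddAbove

lemma le_suppFn {n : ℕ} {K : Set (Euc n)} (hc : IsCompact K) {x w : Euc n}
    (hx : x ∈ K) : ⟪x, w⟫ ≤ suppFn K w :=
  le_csSup (suppFn_bddAbove hc w) ⟨x, hx, rfl⟩

lemma suppFn_pos {n : ℕ} {K : Set (Euc n)} (hK : IsConvexBody0 K)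
    {w : Euc n} (hw : w ∈ uSphere n) : 0 < suppFn K w := by
  obtain ⟨r, hr, hball⟩ := Metric.isOpen_iff.1 isOpen_interior 0 hK.2.2
  have hwn : ‖w‖ = 1 := by simpa [uSphere] using hw
  have hmem : (r/2) • w ∈ K := interior_subset (hball (by
    simp only [mem_ball_iff_norm, sub_zero, norm_smul, hwn, mul_one, Real.norm_eq_abs,
      abs_of_nonneg (by linarith : (0:ℝ) ≤ r/2)]
    linarith))
  calc (0:ℝ) < r/2 := by linarith
    _ = ⟪(r/2) • w, w⟫ := by
        rw [real_inner_smul_left, real_inner_self_eq_norm_sq, hwn]; ring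
    _ ≤ suppFn K w := le_suppFn hK.1 hmem


section MainAux

lemma ereal_coe_sum {α : Type*} (s : Finset α) (f : α → ℝ) :
    ((∑ x ∈ s, f x : ℝ) : EReal) = ∑ x ∈ s, ((f x : ℝ) : EReal) := by
  induction s using Finset.cons_induction with
  | empty => simp
  | cons a s ha ih => rw [Finset.sum_cons, Finset.sum_cons, EReal.coe_add, ih]

lemma sum_assign {k m : ℕ} {μw : Fin m → ℕ} {f : Fin k → Fin m} (hf : IsAssign μw f)
    (φ : Fin m → ℝ) : ∑ j : Fin k, φ (f j) = ∑ i : Fin m, (μw i : ℝ) * φ i := by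
  classical
  rw [← Finset.sum_fiberwise_of_maps_to (fun j _ => Finset.mem_univ (f j)) (fun j => φ (f j))]
  refine Finset.sum_congr rfl fun i _ => ?_
  rw [Finset.sum_congr rfl (fun j hj => by rw [(Finset.mem_filter.1 hj).2]),
      Finset.sum_const, hf i, nsmul_eq_mul]

lemma elog_of_pos {x : ℝ} (hx : 0 < x) : elog x = ((Real.log x : ℝ) : EReal) := by
  rw [elog, if_neg (not_le.2 hx)]

end MainAux

/-- A solution function `g ∈ 𝔽` maximizes the assignment functional. -/
theorem stmt11 (n m k : ℕ) (hn : 1 ≤ n)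
    (v : Fin m → Euc n) (u : Fin k → Euc n)
    (hv : ∀ i, v i ∈ uSphere n) (hu : ∀ j, u j ∈ uSphere n)
    (hvinj : Function.Injective v) (huinj : Function.Injective u)
    (μw : Fin m → ℕ) (hμw : ∀ i, 0 < μw i) (hk : k = ∑ i, μw i)
    (hNH : NotHemisphere v)
    (g : Fin k → Fin m) (hg : IsAssign μw g)
    (K : Set (Euc n)) (hK : IsConvexBody0 K)
    (hrel : GaussRel K (discMeasN (fun _ : Fin k => 1) u) (discMeasN μw v))
    (hint : ∀ j : Fin k,
      u j ∈ sphInterior (normalCone K (radialFn K (v (g j)) • v (g j)))) :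
    ∀ f : Fin k → Fin m, IsAssign μw f → assignA u v f ≤ assignA u v g := by
  intro f hf
  set h : Fin k → ℝ := fun j => suppFn K (u j) with hh
  set ρ : Fin m → ℝ := fun i => radialFn K (v i) with hρ
  have hρpos : ∀ i, 0 < ρ i := fun i => (radial_pos_mem hK (hv i)).1
  have hρmem : ∀ i, ρ i • v i ∈ K := fun i => (radial_pos_mem hK (hv i)).2
  have hhpos : ∀ j, 0 < h j := fun j => suppFn_pos hK (hu j)
  -- u j is in the normal cone at the radial point of v (g j)
  have hnc : ∀ j, u j ∈ normalCone K (ρ (g j) • v (g j)) := by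
    intro j
    obtain ⟨hx, ε, hε, hball⟩ := hint j
    exact hball (u j) hx (by simpa using hε)
  -- the general inequality
  have hineq : ∀ (j : Fin k) (i : Fin m), ⟪u j, v i⟫ ≤ h j / ρ i := by
    intro j i
    have h1 : ⟪ρ i • v i, u j⟫ ≤ h j := le_suppFn hK.1 (hρmem i)
    rw [real_inner_smul_left] at h1
    rw [real_inner_comm, le_div_iff₀ (hρpos i)]
    linarith [h1]
  -- equality for g
  have heqg : ∀ j : Fin k, ⟪u j, v (g j)⟫ = h j / ρ (g j) := by
    intro j
    obtain ⟨-, hle⟩ := hnc j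
    have h2 : h j ≤ ⟪ρ (g j) • v (g j), u j⟫ := by
      refine csSup_le ⟨_, ⟨0, interior_subset hK.2.2, rfl⟩⟩ ?_
      rintro x ⟨y, hy, rfl⟩
      have := hle y hy
      rw [inner_sub_left] at this
      linarith
    have h1 : ⟪ρ (g j) • v (g j), u j⟫ ≤ h j := le_suppFn hK.1 (hρmem (g j))
    have h3 : h j = ρ (g j) * ⟪v (g j), u j⟫ := by
      rw [← real_inner_smul_left]; linarith
    rw [real_inner_comm, eq_div_iff (hρpos (g j)).ne']
    linarith [h3]
  -- termwise bound for f
  have hterm : ∀ j : Fin k,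
      elog ⟪u j, v (f j)⟫ ≤ ((Real.log (h j) - Real.log (ρ (f j)) : ℝ) : EReal) := by
    intro j
    by_cases hle : ⟪u j, v (f j)⟫ ≤ 0
    · rw [elog, if_pos hle]; exact bot_le
    · push_neg at hle
      rw [elog_of_pos hle, EReal.coe_le_coe_iff, ← Real.log_div (hhpos j).ne' (hρpos (f j)).ne']
      exact Real.log_le_log hle (hineq j (f j))
  -- exact value for g
  have htermg : ∀ j : Fin k,
      elog ⟪u j, v (g j)⟫ = ((Real.log (h j) - Real.log (ρ (g j)) : ℝ) : EReal) := by
    intro j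
    rw [heqg j, elog_of_pos (div_pos (hhpos j) (hρpos (g j))),
      Real.log_div (hhpos j).ne' (hρpos (g j)).ne']
  calc assignA u v f ≤ ∑ j : Fin k, ((Real.log (h j) - Real.log (ρ (f j)) : ℝ) : EReal) :=
        Finset.sum_le_sum fun j _ => hterm j
    _ = ((∑ j : Fin k, (Real.log (h j) - Real.log (ρ (f j))) : ℝ) : EReal) :=
        (ereal_coe_sum _ _).symm
    _ = ((∑ j : Fin k, (Real.log (h j) - Real.log (ρ (g j))) : ℝ) : EReal) := by
        norm_cast
        rw [Finset.sum_sub_distrib, Finset.sum_sub_distrib,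
          sum_assign hf (fun i => Real.log (ρ i)), sum_assign hg (fun i => Real.log (ρ i))]
    _ = ∑ j : Fin k, ((Real.log (h j) - Real.log (ρ (g j)) : ℝ) : EReal) := ereal_coe_sum _ _
    _ = assignA u v g := by
        rw [assignA]
        exact Finset.sum_congr rfl fun j _ => (htermg j).symm
end
end

section
/- Let m, k be positive integers and μ_1,…,μ_m positive integers with μ_1 + … + μ_m = k. Let T be the set of real m × k matrices c with all entries nonnegative, every column summing to 1 (∑_{i=1}^m c_{ij} = 1 for each j), and the i-th row summing to μ_i (∑_{j=1}^k c_{ij} = μ_i for each i). Then a matrix c is an extreme point of the convex set T if and only if there exists a function f : {1,…,k} → {1,…,m} with #f⁻¹(i) = μ_i for all i such that c_{ij} = 1 if f(j) = i and c_{ij} = 0 otherwise. -/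
open MeasureTheory Set RealInnerProductSpace
open scoped ENNReal

noncomputable section

private def Dmat {m k : ℕ} (E : Finset (Fin m × Fin k)) (x : ↥E → ℝ) :
    Matrix (Fin m) (Fin k) ℝ :=
  fun i j => if h : (i, j) ∈ E then x ⟨(i, j), h⟩ else 0

private lemma exists_perturb {m k : ℕ} (E : Finset (Fin m × Fin k)) (hne : E.Nonempty)
    (hrow : ∀ p ∈ E, 2 ≤ (E.filter fun q => q.1 = p.1).card)
    (hcol : ∀ p ∈ E, 2 ≤ (E.filter fun q => q.2 = p.2).card) :
    ∃ d : Matrix (Fin m) (Fin k) ℝ, d ≠ 0 ∧ (∀ i j, (i, j) ∉ E → d i j = 0) ∧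
      (∀ i, ∑ j, d i j = 0) ∧ (∀ j, ∑ i, d i j = 0) := by
  by_contra hcon
  have hzero : ∀ d : Matrix (Fin m) (Fin k) ℝ, (∀ i j, (i, j) ∉ E → d i j = 0) →
      (∀ i, ∑ j, d i j = 0) → (∀ j, ∑ i, d i j = 0) → d = 0 := by
    intro d h1 h2 h3
    by_contra hd
    exact hcon ⟨d, hd, h1, h2, h3⟩
  classical
  set R : Finset (Fin m) := E.image Prod.fst with hRdef
  set C : Finset (Fin k) := E.image Prod.snd with hCdef
  have hRne : R.Nonempty := hne.image _
  have hCne : C.Nonempty := hne.image _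
  obtain ⟨c0, hc0⟩ := hCne
  set C' : Finset (Fin k) := C.erase c0 with hC'def
  have hDadd : ∀ (x y : ↥E → ℝ) i j, Dmat E (x + y) i j = Dmat E x i j + Dmat E y i j := by
    intro x y i j
    unfold Dmat
    split <;> simp
  have hDsmul : ∀ (r : ℝ) (x : ↥E → ℝ) i j, Dmat E (r • x) i j = r * Dmat E x i j := by
    intro r x i j
    unfold Dmat
    split <;> simp
  let Φ : (↥E → ℝ) →ₗ[ℝ] (↥R → ℝ) × (↥C' → ℝ) :=
    { toFun := fun x => (fun i => ∑ j, Dmat E x ↑i j, fun j => ∑ i, Dmat E x i ↑j)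
      map_add' := by
        intro x y
        refine Prod.ext ?_ ?_ <;> funext z <;>
          simp [hDadd, Finset.sum_add_distrib]
      map_smul' := by
        intro r x
        refine Prod.ext ?_ ?_ <;> funext z <;>
          simp [hDsmul, Finset.mul_sum] }
  have hinj : Function.Injective Φ := by
    rw [← LinearMap.ker_eq_bot, LinearMap.ker_eq_bot']
    intro x hx
    set d := Dmat E x with hd
    have hsupp : ∀ i j, (i, j) ∉ E → d i j = 0 := by
      intro i j hij
      simp [hd, Dmat, hij]
    have hrows : ∀ i, ∑ j, d i j = 0 := by
      intro i
      by_cases hi : i ∈ R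
      · exact congrFun (congrArg Prod.fst hx) ⟨i, hi⟩
      · refine Finset.sum_eq_zero fun j _ => hsupp i j fun hmem => hi ?_
        exact Finset.mem_image_of_mem Prod.fst hmem
    have hcols : ∀ j, ∑ i, d i j = 0 := by
      intro j
      by_cases hj : j ∈ C'
      · exact congrFun (congrArg Prod.snd hx) ⟨j, hj⟩
      by_cases hjC : j ∈ C
      · have hjc0 : j = c0 := by
          by_contra hne'
          exact hj (Finset.mem_erase.mpr ⟨hne', hjC⟩)
        subst hjc0
        have htot : ∑ j', ∑ i, d i j' = 0 := by
          rw [Finset.sum_comm]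
          exact Finset.sum_eq_zero fun i _ => hrows i
        have hother : ∀ j' : Fin k, j' ≠ j → ∑ i, d i j' = 0 := by
          intro j' hj'
          by_cases hj'C : j' ∈ C
          · exact congrFun (congrArg Prod.snd hx) ⟨j', Finset.mem_erase.mpr ⟨hj', hj'C⟩⟩
          · refine Finset.sum_eq_zero fun i _ => hsupp i j' fun hmem => hj'C ?_
            exact Finset.mem_image_of_mem Prod.snd hmem
        calc ∑ i, d i j = ∑ j' : Fin k, ∑ i, d i j' := by
              rw [Finset.sum_eq_single j]
              · intro j' _ hj'; exact hother j' hj'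
              · intro h; exact absurd (Finset.mem_univ j) h
          _ = 0 := htot
      · refine Finset.sum_eq_zero fun i _ => hsupp i j fun hmem => hjC ?_
        exact Finset.mem_image_of_mem Prod.snd hmem
    have hd0 : d = 0 := hzero d hsupp hrows hcols
    funext p
    have : d p.val.1 p.val.2 = x p := by
      simp [hd, Dmat]
    rw [hd0] at this
    simpa using this.symm
  have hle := LinearMap.finrank_le_finrank_of_injective hinj
  rw [Module.finrank_fintype_fun_eq_card, Module.finrank_prod,
    Module.finrank_fintype_fun_eq_card, Module.finrank_fintype_fun_eq_card,
    Fintype.card_coe, Fintype.card_coe, Fintype.card_coe] at hle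
  -- cardinality facts
  have hR2 : 2 * R.card ≤ E.card := by
    have hfib : E.card = ∑ i ∈ R, (E.filter fun p => p.1 = i).card :=
      Finset.card_eq_sum_card_fiberwise fun p hp => Finset.mem_image_of_mem _ hp
    have : ∑ i ∈ R, 2 ≤ ∑ i ∈ R, (E.filter fun p => p.1 = i).card := by
      refine Finset.sum_le_sum fun i hi => ?_
      obtain ⟨p, hp, hpi⟩ := Finset.mem_image.mp hi
      have := hrow p hp
      rwa [hpi] at this
    simpa [hfib, Finset.sum_const, mul_comm] using this
  have hC2 : 2 * C.card ≤ E.card := by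
    have hfib : E.card = ∑ j ∈ C, (E.filter fun p => p.2 = j).card :=
      Finset.card_eq_sum_card_fiberwise fun p hp => Finset.mem_image_of_mem _ hp
    have : ∑ j ∈ C, 2 ≤ ∑ j ∈ C, (E.filter fun p => p.2 = j).card := by
      refine Finset.sum_le_sum fun j hj => ?_
      obtain ⟨p, hp, hpj⟩ := Finset.mem_image.mp hj
      have := hcol p hp
      rwa [hpj] at this
    simpa [hfib, Finset.sum_const, mul_comm] using this
  have hC'card : C'.card = C.card - 1 := Finset.card_erase_of_mem hc0
  have hC1 : 1 ≤ C.card := Finset.card_pos.mpr ⟨c0, hc0⟩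
  have hR1 : 1 ≤ R.card := Finset.card_pos.mpr hRne
  omega

/-- The extreme points of the transportation polytope are exactly the 0-1
matrices given by functions `f : {1,…,k} → {1,…,m}` with fibers of cardinality `μ_i`. -/
theorem stmt12 (m k : ℕ) (hm : 0 < m) (hk : 0 < k) (μw : Fin m → ℕ)
    (hμw : ∀ i, 0 < μw i) (hsum : ∑ i, μw i = k) :
    ∀ c : Matrix (Fin m) (Fin k) ℝ,
      c ∈ Set.extremePoints ℝ {c : Matrix (Fin m) (Fin k) ℝ |
          (∀ i j, 0 ≤ c i j) ∧ (∀ j, ∑ i, c i j = 1) ∧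
          (∀ i, ∑ j, c i j = (μw i : ℝ))} ↔
      ∃ f : Fin k → Fin m,
        (∀ i : Fin m, (Finset.univ.filter fun j => f j = i).card = μw i) ∧
        ∀ i j, c i j = if f j = i then 1 else 0 := by
  classical
  intro c
  constructor
  · intro hext
    obtain ⟨hcT, hextr⟩ := hext
    obtain ⟨hpos, hcolsum, hrowsum⟩ := hcT
    set E := Finset.univ.filter
      (fun p : Fin m × Fin k => c p.1 p.2 ≠ 0 ∧ c p.1 p.2 ≠ 1) with hEdef
    have hle1 : ∀ i j, c i j ≤ 1 := by
      intro i j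
      calc c i j ≤ ∑ i', c i' j :=
            Finset.single_le_sum (fun i' _ => hpos i' j) (Finset.mem_univ i)
        _ = 1 := hcolsum j
    have hfrac : ∀ p ∈ E, 0 < c p.1 p.2 ∧ c p.1 p.2 < 1 := by
      intro p hp
      rw [hEdef, Finset.mem_filter] at hp
      exact ⟨lt_of_le_of_ne (hpos p.1 p.2) (Ne.symm hp.2.1),
        lt_of_le_of_ne (hle1 p.1 p.2) hp.2.2⟩
    have hEempty : E = ∅ := by
      by_contra hEne
      have hne : E.Nonempty := Finset.nonempty_of_ne_empty hEne
      -- column degree condition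
      have hcol : ∀ p ∈ E, 2 ≤ (E.filter fun q => q.2 = p.2).card := by
        intro p hp
        obtain ⟨hc0, hc1⟩ := hfrac p hp
        have : ∃ i', i' ≠ p.1 ∧ c i' p.2 ≠ 0 ∧ c i' p.2 ≠ 1 := by
          by_contra hno
          push_neg at hno
          have h01 : ∀ i' ∈ Finset.univ.erase p.1,
              c i' p.2 = if c i' p.2 = 1 then (1:ℝ) else 0 := by
            intro i' hi'
            have hi'ne : i' ≠ p.1 := (Finset.mem_erase.mp hi').1
            by_cases h1 : c i' p.2 = 1
            · simp [h1]
            · simp [h1]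
              by_contra h0
              exact h1 (hno i' hi'ne h0)
          have hsplit : c p.1 p.2 + ∑ i' ∈ Finset.univ.erase p.1, c i' p.2
              = ∑ i', c i' p.2 :=
            Finset.add_sum_erase Finset.univ (fun i' => c i' p.2) (Finset.mem_univ p.1)
          set z : ℤ := ∑ i' ∈ Finset.univ.erase p.1,
            (if c i' p.2 = 1 then (1:ℤ) else 0) with hz
          have hzeq : ∑ i' ∈ Finset.univ.erase p.1, c i' p.2 = (z : ℝ) := by
            rw [hz]
            push_cast
            exact Finset.sum_congr rfl h01
          rw [hzeq, hcolsum p.2] at hsplit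
          have hz0 : (0:ℝ) < 1 - z := by linarith
          have hz1 : (1:ℝ) - z < 1 := by linarith
          have hz0' : (0:ℤ) < 1 - z := by exact_mod_cast hz0
          have hz1' : (1:ℤ) - z < 1 := by exact_mod_cast hz1
          omega
        obtain ⟨i', hi'ne, hi'0, hi'1⟩ := this
        refine Finset.one_lt_card.mpr ⟨p, ?_, (i', p.2), ?_, ?_⟩
        · exact Finset.mem_filter.mpr ⟨hp, rfl⟩
        · refine Finset.mem_filter.mpr ⟨?_, rfl⟩
          rw [hEdef, Finset.mem_filter]
          exact ⟨Finset.mem_univ _, hi'0, hi'1⟩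
        · intro hpq
          exact hi'ne (congrArg Prod.fst hpq).symm
      -- row degree condition
      have hrowdeg : ∀ p ∈ E, 2 ≤ (E.filter fun q => q.1 = p.1).card := by
        intro p hp
        obtain ⟨hc0, hc1⟩ := hfrac p hp
        have : ∃ j', j' ≠ p.2 ∧ c p.1 j' ≠ 0 ∧ c p.1 j' ≠ 1 := by
          by_contra hno
          push_neg at hno
          have h01 : ∀ j' ∈ Finset.univ.erase p.2,
              c p.1 j' = if c p.1 j' = 1 then (1:ℝ) else 0 := by
            intro j' hj'
            have hj'ne : j' ≠ p.2 := (Finset.mem_erase.mp hj').1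
            by_cases h1 : c p.1 j' = 1
            · simp [h1]
            · simp [h1]
              by_contra h0
              exact h1 (hno j' hj'ne h0)
          have hsplit : c p.1 p.2 + ∑ j' ∈ Finset.univ.erase p.2, c p.1 j'
              = ∑ j', c p.1 j' :=
            Finset.add_sum_erase Finset.univ (fun j' => c p.1 j') (Finset.mem_univ p.2)
          set z : ℤ := ∑ j' ∈ Finset.univ.erase p.2,
            (if c p.1 j' = 1 then (1:ℤ) else 0) with hz
          have hzeq : ∑ j' ∈ Finset.univ.erase p.2, c p.1 j' = (z : ℝ) := by
            rw [hz]
            push_cast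
            exact Finset.sum_congr rfl h01
          rw [hzeq, hrowsum p.1] at hsplit
          have hz0 : (0:ℝ) < (μw p.1 : ℝ) - z := by linarith
          have hz1 : (μw p.1 : ℝ) - z < 1 := by linarith
          have hz0' : (0:ℤ) < (μw p.1 : ℤ) - z := by exact_mod_cast hz0
          have hz1' : (μw p.1 : ℤ) - z < 1 := by exact_mod_cast hz1
          omega
        obtain ⟨j', hj'ne, hj'0, hj'1⟩ := this
        refine Finset.one_lt_card.mpr ⟨p, ?_, (p.1, j'), ?_, ?_⟩
        · exact Finset.mem_filter.mpr ⟨hp, rfl⟩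
        · refine Finset.mem_filter.mpr ⟨?_, rfl⟩
          rw [hEdef, Finset.mem_filter]
          exact ⟨Finset.mem_univ _, hj'0, hj'1⟩
        · intro hpq
          exact hj'ne (congrArg Prod.snd hpq).symm
      obtain ⟨d, hd0, hsupp, hrows, hcols⟩ := exists_perturb E hne hrowdeg hcol
      set ε : ℝ := E.inf' hne fun p => c p.1 p.2 / (|d p.1 p.2| + 1) with hεdef
      have hε : 0 < ε := by
        rw [hεdef, Finset.lt_inf'_iff]
        intro p hp
        have := (hfrac p hp).1
        positivity
      have hkey : ∀ i j, ε * |d i j| ≤ c i j := by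
        intro i j
        by_cases hij : (i, j) ∈ E
        · have h1 : ε ≤ c i j / (|d i j| + 1) := Finset.inf'_le _ hij
          have h2 : (0:ℝ) < |d i j| + 1 := by positivity
          have h3 : 0 < c i j := (hfrac (i, j) hij).1
          have h4 : 0 ≤ |d i j| := abs_nonneg _
          calc ε * |d i j| ≤ c i j / (|d i j| + 1) * |d i j| := by
                exact mul_le_mul_of_nonneg_right h1 h4
            _ ≤ c i j := by
                rw [div_mul_eq_mul_div, div_le_iff₀ h2]
                nlinarith
        · rw [hsupp i j hij]
          simpa using hpos i j
      have haT : (∀ i j, 0 ≤ (c - ε • d) i j) ∧ (∀ j, ∑ i, (c - ε • d) i j = 1) ∧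
          (∀ i, ∑ j, (c - ε • d) i j = (μw i : ℝ)) := by
        refine ⟨fun i j => ?_, fun j => ?_, fun i => ?_⟩
        · have h1 : ε * d i j ≤ ε * |d i j| :=
            mul_le_mul_of_nonneg_left (le_abs_self _) hε.le
          have := hkey i j
          simp only [Matrix.sub_apply, Matrix.smul_apply, smul_eq_mul]
          linarith
        · simp only [Matrix.sub_apply, Matrix.smul_apply, smul_eq_mul]
          rw [Finset.sum_sub_distrib, ← Finset.mul_sum, hcols j, hcolsum j]
          ring
        · simp only [Matrix.sub_apply, Matrix.smul_apply, smul_eq_mul]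
          rw [Finset.sum_sub_distrib, ← Finset.mul_sum, hrows i, hrowsum i]
          ring
      have hbT : (∀ i j, 0 ≤ (c + ε • d) i j) ∧ (∀ j, ∑ i, (c + ε • d) i j = 1) ∧
          (∀ i, ∑ j, (c + ε • d) i j = (μw i : ℝ)) := by
        refine ⟨fun i j => ?_, fun j => ?_, fun i => ?_⟩
        · have h1 : -(ε * d i j) ≤ ε * |d i j| := by
            rw [← mul_neg]
            exact mul_le_mul_of_nonneg_left (neg_le_abs _) hε.le
          have := hkey i j
          simp only [Matrix.add_apply, Matrix.smul_apply, smul_eq_mul]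
          linarith
        · simp only [Matrix.add_apply, Matrix.smul_apply, smul_eq_mul]
          rw [Finset.sum_add_distrib, ← Finset.mul_sum, hcols j, hcolsum j]
          ring
        · simp only [Matrix.add_apply, Matrix.smul_apply, smul_eq_mul]
          rw [Finset.sum_add_distrib, ← Finset.mul_sum, hrows i, hrowsum i]
          ring
      have hseg : c ∈ openSegment ℝ (c - ε • d) (c + ε • d) := by
        refine ⟨1/2, 1/2, by norm_num, by norm_num, by norm_num, ?_⟩
        module
      have := hextr haT hbT hseg
      have hεd : ε • d = 0 := by
        have h' : c - ε • d - c = 0 := by rw [this]; simp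
        simpa using h'
      rcases smul_eq_zero.mp hεd with h' | h'
      · exact hε.ne' h'
      · exact hd0 h'
    have h01 : ∀ i j, c i j = 0 ∨ c i j = 1 := by
      intro i j
      by_contra h
      push_neg at h
      have : (i, j) ∈ E := by
        rw [hEdef, Finset.mem_filter]
        exact ⟨Finset.mem_univ _, h.1, h.2⟩
      rw [hEempty] at this
      exact absurd this (Finset.notMem_empty _)
    have hex1 : ∀ j, ∃ i, c i j = 1 := by
      intro j
      by_contra h
      push_neg at h
      have : ∑ i, c i j = 0 :=
        Finset.sum_eq_zero fun i _ => (h01 i j).resolve_right (h i)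
      rw [hcolsum j] at this
      norm_num at this
    choose f hf using hex1
    have hcval : ∀ i j, c i j = if f j = i then 1 else 0 := by
      intro i j
      by_cases hij : f j = i
      · subst hij
        simp [hf j]
      · simp only [hij, if_false]
        rcases h01 i j with h | h
        · exact h
        · exfalso
          have hsplit : c (f j) j + ∑ i' ∈ Finset.univ.erase (f j), c i' j
              = ∑ i', c i' j :=
            Finset.add_sum_erase Finset.univ (fun i' => c i' j) (Finset.mem_univ (f j))
          have hmem : i ∈ Finset.univ.erase (f j) :=
            Finset.mem_erase.mpr ⟨fun h' => hij h'.symm, Finset.mem_univ _⟩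
          have hle : c i j ≤ ∑ i' ∈ Finset.univ.erase (f j), c i' j :=
            Finset.single_le_sum (fun i' _ => hpos i' j) hmem
          rw [hcolsum j, hf j] at hsplit
          rw [h] at hle
          linarith
    refine ⟨f, ?_, hcval⟩
    intro i
    have : ((Finset.univ.filter fun j => f j = i).card : ℝ) = (μw i : ℝ) := by
      rw [← Finset.sum_boole, ← hrowsum i]
      exact (Finset.sum_congr rfl fun j _ => (hcval i j)).symm
    exact_mod_cast this
  · rintro ⟨f, hfib, hcval⟩
    have hcT : (∀ i j, 0 ≤ c i j) ∧ (∀ j, ∑ i, c i j = 1) ∧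
        (∀ i, ∑ j, c i j = (μw i : ℝ)) := by
      refine ⟨fun i j => ?_, fun j => ?_, fun i => ?_⟩
      · rw [hcval]; split <;> norm_num
      · simp only [hcval]
        simp
      · simp only [hcval]
        rw [Finset.sum_boole]
        exact_mod_cast hfib i
    refine ⟨hcT, ?_⟩
    intro x hx y hy hseg
    obtain ⟨hxpos, hxcol, hxrow⟩ := hx
    obtain ⟨hypos, hycol, hyrow⟩ := hy
    obtain ⟨a, b, ha, hb, hab, habc⟩ := hseg
    have hentry : ∀ i j, a * x i j + b * y i j = c i j := by
      intro i j
      have := congrFun (congrFun habc i) j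
      simpa [Matrix.add_apply, Matrix.smul_apply, smul_eq_mul] using this
    have hzero : ∀ i j, f j ≠ i → x i j = 0 ∧ y i j = 0 := by
      intro i j hij
      have hc0 : c i j = 0 := by rw [hcval]; simp [hij]
      have h := hentry i j
      rw [hc0] at h
      have hx0 : 0 ≤ a * x i j := mul_nonneg ha.le (hxpos i j)
      have hy0 : 0 ≤ b * y i j := mul_nonneg hb.le (hypos i j)
      constructor
      · have : a * x i j = 0 := by linarith
        rcases mul_eq_zero.mp this with h' | h'
        · exact absurd h' ha.ne'
        · exact h'
      · have : b * y i j = 0 := by linarith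
        rcases mul_eq_zero.mp this with h' | h'
        · exact absurd h' hb.ne'
        · exact h'
    have hone : ∀ (w : Matrix (Fin m) (Fin k) ℝ), (∀ j, ∑ i, w i j = 1) →
        (∀ i j, f j ≠ i → w i j = 0) → ∀ j, w (f j) j = 1 := by
      intro w hwcol hw0 j
      have : ∑ i, w i j = w (f j) j := by
        refine Finset.sum_eq_single (f j) (fun i _ hi => hw0 i j (Ne.symm hi)) ?_
        intro h
        exact absurd (Finset.mem_univ _) h
      rw [← this, hwcol j]
    have hxc : x = c := by
      ext i j
      rw [hcval]
      by_cases hij : f j = i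
      · subst hij
        rw [hone x hxcol (fun i j h => (hzero i j h).1) j]
        simp
      · rw [(hzero i j hij).1]
        simp [hij]
    have hyc : y = c := by
      ext i j
      rw [hcval]
      by_cases hij : f j = i
      · subst hij
        rw [hone y hycol (fun i j h => (hzero i j h).2) j]
        simp
      · rw [(hzero i j hij).2]
        simp [hij]
    exact hxc
end
end

section
/- Let m ≥ 1 and let a : {1,…,m} × {1,…,m} → ℝ ∪ {−∞} (values in EReal, never +∞) satisfy a(i,i) = 0 for all i. Then there exists x : {1,…,m} → ℝ such that a(j,i) ≤ x_j − x_i for all i ≠ j, if and only if for every permutation σ of {1,…,m}, ∑_{i=1}^m a(i, σ(i)) ≤ 0. -/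
open MeasureTheory Set RealInnerProductSpace
open scoped ENNReal

noncomputable section

namespace Stmt13Aux

variable {m : ℕ}

/-- Walk weight: the weight of walk `[p0, p1, ..., pk]` is `∑ b p_{t+1} p_t`. -/
def ww (b : Fin m → Fin m → ℝ) : List (Fin m) → ℝ
  | p :: q :: l => b q p + ww b (q :: l)
  | _ => 0

variable (b : Fin m → Fin m → ℝ)

@[simp] lemma ww_nil : ww b [] = 0 := rfl
@[simp] lemma ww_single (j : Fin m) : ww b [j] = 0 := rfl
@[simp] lemma ww_cons_cons (p q : Fin m) (l : List (Fin m)) :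
    ww b (p :: q :: l) = b q p + ww b (q :: l) := rfl

lemma ww_split (l₁ : List (Fin m)) (x : Fin m) (l₂ : List (Fin m)) :
    ww b (l₁ ++ x :: l₂) = ww b (l₁ ++ [x]) + ww b (x :: l₂) := by
  induction l₁ with
  | nil => simp
  | cons p l₁ ih =>
    cases l₁ with
    | nil => simp
    | cons q r =>
      simp only [List.cons_append, ww_cons_cons] at *
      rw [ih]; ring

lemma ww_snoc (l : List (Fin m)) (h : l ≠ []) (j : Fin m) :
    ww b (l ++ [j]) = ww b l + b j (l.getLast h) := by
  induction l with
  | nil => exact absurd rfl h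
  | cons p l ih =>
    cases l with
    | nil => simp
    | cons q r =>
      simp only [List.cons_append, ww_cons_cons]
      rw [show q :: (r ++ [j]) = (q :: r) ++ [j] from rfl, ih (by simp),
        show (p :: q :: r).getLast h = (q :: r).getLast (by simp) from List.getLast_cons (by simp)]
      ring

end Stmt13Aux

namespace Stmt13Aux
variable {m : ℕ} (b : Fin m → Fin m → ℝ)

/-- Weight of the walk `f 0 → f 1 → ... → f k`. -/
def wf (k : ℕ) (f : Fin (k + 1) → Fin m) : ℝ :=
  ∑ t : Fin k, b (f t.succ) (f t.castSucc)

/-- Weight of the closed walk `f 0 → f 1 → ... → f k → f 0` (cyclic indexing). -/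
def cyc (k : ℕ) (f : Fin (k + 1) → Fin m) : ℝ :=
  ∑ t : Fin (k + 1), b (f (t + 1)) (f t)

lemma cyc_eq (k : ℕ) (f : Fin (k + 1) → Fin m) :
    cyc b k f = wf b k f + b (f 0) (f (Fin.last k)) := by
  rw [cyc, Fin.sum_univ_castSucc]
  congr 1
  · apply Finset.sum_congr rfl
    intro t _
    congr 1
    congr 1
    ext
    simp [Fin.val_add_one_of_lt (Fin.castSucc_lt_last t)]
  · congr 1
    congr 1
    simp

lemma cyc_le (hdiag : ∀ i, b i i = 0)
    (hperm : ∀ σ : Equiv.Perm (Fin m), ∑ i : Fin m, b i (σ i) ≤ 0)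
    (k : ℕ) (f : Fin (k + 1) → Fin m) (hinj : Function.Injective f) :
    cyc b k f ≤ 0 := by
  classical
  set ι : Fin (k+1) ↪ Fin m := ⟨f, hinj⟩ with hι
  set τ : Equiv.Perm (Fin m) :=
    Equiv.Perm.viaEmbedding (Equiv.subRight (1 : Fin (k+1))) ι with hτ
  have happ : ∀ t, τ (f t) = f (t - 1) := by
    intro t
    have := Equiv.Perm.viaEmbedding_apply (Equiv.subRight (1 : Fin (k+1))) ι t
    simpa [hι, hτ, Equiv.subRight] using this
  have hoff : ∀ x : Fin m, x ∉ Finset.univ.image f → b x (τ x) = 0 := by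
    intro x hx
    have hx' : x ∉ Set.range f := by
      simp only [Finset.mem_image, Finset.mem_univ, true_and] at hx
      rintro ⟨t, rfl⟩
      exact hx ⟨t, rfl⟩
    rw [Equiv.Perm.viaEmbedding_apply_of_notMem _ ι x hx', hdiag]
  have key : ∑ x : Fin m, b x (τ x) = cyc b k f := by
    rw [← Finset.sum_subset (Finset.subset_univ (Finset.univ.image f))
      (fun x _ hx => hoff x hx)]
    rw [Finset.sum_image (fun x _ y _ h => hinj h)]
    have : ∀ t : Fin (k+1), b (f t) (τ (f t)) = b (f t) (f (t - 1)) := fun t => by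
      rw [happ]
    rw [Finset.sum_congr rfl fun t _ => this t]
    have := Equiv.sum_comp (Equiv.addRight (1 : Fin (k+1)))
      (fun s => b (f s) (f (s - 1)))
    rw [← this]
    apply Finset.sum_congr rfl
    intro t _
    simp [Equiv.addRight, cyc]
  rw [← key]
  exact hperm τ
end Stmt13Aux

namespace Stmt13Aux
variable {m : ℕ} (b : Fin m → Fin m → ℝ)

lemma ww_ofFn : ∀ (k : ℕ) (f : Fin (k + 1) → Fin m), ww b (List.ofFn f) = wf b k f := by
  intro k
  induction k with
  | zero => intro f; simp [wf, List.ofFn_succ]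
  | succ k ih =>
    intro f
    have ihg := ih (fun i => f i.succ)
    simp only [List.ofFn_succ] at ihg ⊢
    rw [ww_cons_cons, ihg]
    simp [wf, Fin.sum_univ_succ, Fin.castSucc_succ]

lemma nodup_closed (hdiag : ∀ i, b i i = 0)
    (hperm : ∀ σ : Equiv.Perm (Fin m), ∑ i : Fin m, b i (σ i) ≤ 0)
    (l : List (Fin m)) (i : Fin m) (hnd : (i :: l).Nodup) :
    ww b (i :: l ++ [i]) ≤ 0 := by
  have hinj : Function.Injective (i :: l).get := List.nodup_iff_injective_get.mp hnd
  have h1 : cyc b l.length ((i :: l).get) ≤ 0 := cyc_le b hdiag hperm _ _ hinj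
  rw [cyc_eq] at h1
  have h2 : ww b (List.ofFn ((i :: l).get)) = wf b l.length ((i :: l).get) :=
    ww_ofFn b _ _
  rw [List.ofFn_get] at h2
  rw [show i :: l ++ [i] = (i :: l) ++ [i] from rfl, ww_snoc b _ (by simp) i, h2]
  have e0 : (i :: l).get (0 : Fin (l.length + 1)) = i := rfl
  have e1 : (i :: l).get (Fin.last l.length) = (i :: l).getLast (by simp) := by
    rw [List.getLast_eq_getElem]
    simp [List.get_eq_getElem]
  rw [e0, e1] at h1
  linarith
end Stmt13Aux

namespace Stmt13Aux
variable {m : ℕ} (b : Fin m → Fin m → ℝ)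

lemma exists_dup {α : Type*} : ∀ (l : List α), ¬ l.Nodup →
    ∃ (l₁ : List α) (x : α) (l₂ l₃ : List α), l = l₁ ++ x :: l₂ ++ x :: l₃ := by
  intro l
  induction l with
  | nil => intro h; exact absurd List.nodup_nil h
  | cons p l ih =>
    intro h
    rw [List.nodup_cons] at h
    by_cases hp : p ∈ l
    · obtain ⟨s, t, rfl⟩ := List.append_of_mem hp
      exact ⟨[], p, s, t, by simp⟩
    · have hl : ¬ l.Nodup := fun hnd => h ⟨hp, hnd⟩
      obtain ⟨l₁, x, l₂, l₃, rfl⟩ := ih hl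
      exact ⟨p :: l₁, x, l₂, l₃, by simp⟩

lemma ww_excise (l₁ : List (Fin m)) (x : Fin m) (l₂ l₃ : List (Fin m)) :
    ww b (l₁ ++ x :: l₂ ++ x :: l₃) =
      ww b (l₁ ++ x :: l₃) + ww b (x :: l₂ ++ [x]) := by
  have h1 : l₁ ++ x :: l₂ ++ x :: l₃ = l₁ ++ x :: (l₂ ++ x :: l₃) := by simp
  rw [h1, ww_split]
  have h2 : x :: (l₂ ++ x :: l₃) = (x :: l₂) ++ x :: l₃ := by simp
  rw [h2, ww_split b (x :: l₂) x l₃, ww_split b l₁ x l₃]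
  have h3 : (x :: l₂) ++ [x] = x :: l₂ ++ [x] := by simp
  rw [h3]
  ring

lemma closed_le (hdiag : ∀ i, b i i = 0)
    (hperm : ∀ σ : Equiv.Perm (Fin m), ∑ i : Fin m, b i (σ i) ≤ 0) :
    ∀ (n : ℕ) (l : List (Fin m)), l.length ≤ n → ∀ i : Fin m,
      ww b (i :: l ++ [i]) ≤ 0 := by
  intro n
  induction n with
  | zero =>
    intro l hl i
    rw [List.length_eq_zero_iff.mp (Nat.le_zero.mp hl)]
    simp [hdiag]
  | succ n ih =>
    intro l hl i
    by_cases hnd : (i :: l).Nodup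
    · exact nodup_closed b hdiag hperm l i hnd
    · obtain ⟨l₁, x, l₂, l₃, hdec⟩ := exists_dup (i :: l) hnd
      have hlen := congrArg List.length hdec
      simp only [List.length_cons, List.length_append] at hlen
      have key : ww b (i :: l ++ [i]) =
          ww b (l₁ ++ x :: (l₃ ++ [i])) + ww b (x :: l₂ ++ [x]) := by
        have : i :: l ++ [i] = l₁ ++ x :: l₂ ++ x :: (l₃ ++ [i]) := by
          rw [show i :: l ++ [i] = (i :: l) ++ [i] from rfl, hdec]; simp
        rw [this, ww_excise]
      have hx2 : ww b (x :: l₂ ++ [x]) ≤ 0 := ih l₂ (by omega) x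
      have hx1 : ww b (l₁ ++ x :: (l₃ ++ [i])) ≤ 0 := by
        cases l₁ with
        | nil =>
          have hix : i = x := by simpa using congrArg (·.head?) hdec
          rw [hix] at *
          exact ih l₃ (by omega) x
        | cons y l₁' =>
          have hiy : y = i := by simpa using (congrArg (·.head?) hdec).symm
          have : l₁' ++ x :: (l₃ ++ [i]) = (l₁' ++ x :: l₃) ++ [i] := by simp
          rw [hiy, show (i :: l₁') ++ x :: (l₃ ++ [i])
              = i :: ((l₁' ++ x :: l₃) ++ [i]) by simp]
          exact ih (l₁' ++ x :: l₃) (by simp at hlen ⊢; omega) i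
      linarith
end Stmt13Aux

namespace Stmt13Aux
variable {m : ℕ} (b : Fin m → Fin m → ℝ)

lemma reduce (hdiag : ∀ i, b i i = 0)
    (hperm : ∀ σ : Equiv.Perm (Fin m), ∑ i : Fin m, b i (σ i) ≤ 0) :
    ∀ (n : ℕ) (l : List (Fin m)), l.length ≤ n → l ≠ [] →
      ∃ l' : List (Fin m), l'.Nodup ∧ l' ≠ [] ∧ l'.getLast? = l.getLast? ∧
        ww b l ≤ ww b l' := by
  intro n
  induction n with
  | zero =>
    intro l hl hne
    exact absurd (List.length_eq_zero_iff.mp (Nat.le_zero.mp hl)) hne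
  | succ n ih =>
    intro l hl hne
    by_cases hnd : l.Nodup
    · exact ⟨l, hnd, hne, rfl, le_refl _⟩
    · obtain ⟨l₁, x, l₂, l₃, hdec⟩ := exists_dup l hnd
      have hlen := congrArg List.length hdec
      simp only [List.length_append, List.length_cons] at hlen
      have key : ww b l = ww b (l₁ ++ x :: l₃) + ww b (x :: l₂ ++ [x]) := by
        rw [hdec, ww_excise]
      have hc : ww b (x :: l₂ ++ [x]) ≤ 0 :=
        closed_le b hdiag hperm l₂.length l₂ le_rfl x
      have hlast : (l₁ ++ x :: l₃).getLast? = l.getLast? := by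
        rw [hdec, List.getLast?_append_cons,
          show l₁ ++ x :: l₂ ++ x :: l₃ = (l₁ ++ x :: l₂) ++ x :: l₃ by simp,
          List.getLast?_append_cons]
      obtain ⟨l', h1, h2, h3, h4⟩ := ih (l₁ ++ x :: l₃)
        (by simp only [List.length_append, List.length_cons]; omega) (by simp)
      exact ⟨l', h1, h2, h3.trans hlast, by linarith⟩

/-- Bellman–Ford iteration. -/
def dd (hm : 0 < m) : ℕ → Fin m → ℝ
  | 0, _ => 0
  | k + 1, j => max (dd hm k j)
      (Finset.univ.sup' ⟨⟨0, hm⟩, Finset.mem_univ _⟩ (fun i => dd hm k i + b j i))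

variable (hm : 0 < m)

lemma dd_mono (k : ℕ) (j : Fin m) : dd b hm k j ≤ dd b hm (k + 1) j :=
  le_max_left _ _

lemma dd_rel (k : ℕ) (i j : Fin m) : dd b hm k i + b j i ≤ dd b hm (k + 1) j :=
  le_trans (Finset.le_sup' (fun i => dd b hm k i + b j i) (Finset.mem_univ i))
    (le_max_right _ _)

lemma dd_reach (k : ℕ) (j : Fin m) :
    ∃ l : List (Fin m), l ≠ [] ∧ l.getLast? = some j ∧ dd b hm k j = ww b l := by
  induction k generalizing j with
  | zero => exact ⟨[j], by simp, by simp, by simp [dd]⟩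
  | succ k ih =>
    rcases max_choice (dd b hm k j)
      (Finset.univ.sup' ⟨⟨0, hm⟩, Finset.mem_univ _⟩ (fun i => dd b hm k i + b j i))
      with hc | hc
    · obtain ⟨l, h1, h2, h3⟩ := ih j
      exact ⟨l, h1, h2, by rw [show dd b hm (k+1) j = max (dd b hm k j)
        (Finset.univ.sup' ⟨⟨0, hm⟩, Finset.mem_univ _⟩ (fun i => dd b hm k i + b j i))
        from rfl, hc, h3]⟩
    · obtain ⟨i, -, hi⟩ := Finset.exists_mem_eq_sup' ⟨⟨0, hm⟩, Finset.mem_univ _⟩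
        (fun i => dd b hm k i + b j i)
      obtain ⟨l, h1, h2, h3⟩ := ih i
      refine ⟨l ++ [j], by simp, by simp, ?_⟩
      have hlast : l.getLast h1 = i := by
        rwa [List.getLast?_eq_getLast h1, Option.some_inj] at h2
      rw [ww_snoc b l h1 j, hlast, show dd b hm (k+1) j = max (dd b hm k j)
        (Finset.univ.sup' ⟨⟨0, hm⟩, Finset.mem_univ _⟩ (fun i => dd b hm k i + b j i))
        from rfl, hc, hi, h3]

lemma dd_ge (k : ℕ) : ∀ (l : List (Fin m)) (h : l ≠ []), l.length ≤ k + 1 →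
    ww b l ≤ dd b hm k (l.getLast h) := by
  induction k with
  | zero =>
    intro l h hl
    obtain ⟨x, rfl⟩ := List.length_eq_one_iff.mp (Nat.le_antisymm hl (by
      cases l with
      | nil => exact absurd rfl h
      | cons p l' => simp))
    simp [dd]
  | succ k ih =>
    intro l h hl
    by_cases hs : l.length ≤ k + 1
    · exact le_trans (ih l h hs) (dd_mono b hm k _)
    · have hdl : l.dropLast ≠ [] := by
        intro hbad
        have := congrArg List.length hbad
        rw [List.length_dropLast] at this
        simp at this
        omega
      have hsplit : l = l.dropLast ++ [l.getLast h] := (List.dropLast_append_getLast h).symm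
      have hww : ww b l = ww b l.dropLast + b (l.getLast h) (l.dropLast.getLast hdl) := by
        conv_lhs => rw [hsplit]
        rw [ww_snoc b _ hdl]
      rw [hww]
      have h1 : ww b l.dropLast ≤ dd b hm k (l.dropLast.getLast hdl) := by
        apply ih
        rw [List.length_dropLast]
        omega
      have h2 := dd_rel b hm k (l.dropLast.getLast hdl) (l.getLast h)
      linarith

lemma dd_stab (hdiag : ∀ i, b i i = 0)
    (hperm : ∀ σ : Equiv.Perm (Fin m), ∑ i : Fin m, b i (σ i) ≤ 0)
    (k : ℕ) (j : Fin m) : dd b hm k j ≤ dd b hm m j := by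
  obtain ⟨l, h1, h2, h3⟩ := dd_reach b hm k j
  obtain ⟨l', hnd, hne, hlast, hle⟩ := reduce b hdiag hperm l.length l le_rfl h1
  have hlen : l'.length ≤ m := by
    have := List.Nodup.length_le_card hnd
    simpa using this
  have hge := dd_ge b hm m l' hne (by omega)
  have hlast' : l'.getLast hne = j := by
    have h5 := (List.getLast?_eq_getLast hne).symm.trans (hlast.trans h2)
    exact Option.some_inj.mp h5
  rw [h3]
  calc ww b l ≤ ww b l' := hle
    _ ≤ dd b hm m (l'.getLast hne) := hge
    _ = dd b hm m j := by rw [hlast']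

theorem real_version (hm : 0 < m) (b : Fin m → Fin m → ℝ)
    (hdiag : ∀ i, b i i = 0)
    (hperm : ∀ σ : Equiv.Perm (Fin m), ∑ i : Fin m, b i (σ i) ≤ 0) :
    ∃ x : Fin m → ℝ, ∀ i j : Fin m, b j i ≤ x j - x i := by
  refine ⟨dd b hm m, fun i j => ?_⟩
  have h1 := dd_rel b hm m i j
  have h2 := dd_stab b hm hdiag hperm (m + 1) j
  linarith

end Stmt13Aux

namespace Stmt13Aux

lemma coe_fsum {α : Type*} (s : Finset α) (f : α → ℝ) :
    ((∑ i ∈ s, f i : ℝ) : EReal) = ∑ i ∈ s, (f i : EReal) := by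
  induction s using Finset.cons_induction with
  | empty => simp
  | cons a s ha ih => rw [Finset.sum_cons, Finset.sum_cons, EReal.coe_add, ih]

end Stmt13Aux

theorem stmt13' (m : ℕ) (hm : 1 ≤ m) (a : Fin m → Fin m → EReal)
    (htop : ∀ i j, a i j ≠ ⊤) (hdiag : ∀ i, a i i = 0) :
    (∃ x : Fin m → ℝ, ∀ i j : Fin m, i ≠ j → a j i ≤ ((x j - x i : ℝ) : EReal)) ↔
    (∀ σ : Equiv.Perm (Fin m), ∑ i : Fin m, a i (σ i) ≤ 0) := by
  constructor
  · rintro ⟨x, hx⟩ σ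
    have step : ∀ i : Fin m, a i (σ i) ≤ ((x i - x (σ i) : ℝ) : EReal) := by
      intro i
      by_cases h : σ i = i
      · rw [h, hdiag i]
        simp
      · exact hx (σ i) i h
    calc ∑ i : Fin m, a i (σ i) ≤ ∑ i : Fin m, ((x i - x (σ i) : ℝ) : EReal) :=
          Finset.sum_le_sum (fun i _ => step i)
      _ = ((∑ i : Fin m, (x i - x (σ i)) : ℝ) : EReal) :=
          (Stmt13Aux.coe_fsum _ _).symm
      _ = ((0 : ℝ) : EReal) := by
          norm_num [Finset.sum_sub_distrib, Equiv.sum_comp σ x]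
      _ = 0 := by norm_num
  · intro hperm
    classical
    set T : ℝ := ∑ p : Fin m, ∑ q : Fin m, |(a p q).toReal| with hT
    have hT0 : 0 ≤ T :=
      Finset.sum_nonneg fun p _ => Finset.sum_nonneg fun q _ => abs_nonneg _
    set L : ℝ := -(m : ℝ) * T - 1 with hL
    set b : Fin m → Fin m → ℝ :=
      fun p q => if a p q = ⊥ then L else (a p q).toReal with hb
    have hbdiag : ∀ i, b i i = 0 := by
      intro i
      simp only [hb]
      rw [if_neg (by rw [hdiag i]; simp), hdiag i]
      simp
    have hble : ∀ p q, a p q ≤ ((b p q : ℝ) : EReal) := by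
      intro p q
      simp only [hb]
      by_cases h : a p q = ⊥
      · rw [if_pos h, h]; exact bot_le
      · rw [if_neg h, EReal.coe_toReal (htop p q) h]
    have hbT : ∀ p q, b p q ≤ T := by
      intro p q
      simp only [hb]
      by_cases h : a p q = ⊥
      · rw [if_pos h, hL]
        nlinarith [Nat.cast_nonneg (α := ℝ) m]
      · rw [if_neg h]
        calc (a p q).toReal ≤ |(a p q).toReal| := le_abs_self _
          _ ≤ ∑ q' : Fin m, |(a p q').toReal| :=
            Finset.single_le_sum (f := fun q' => |(a p q').toReal|)
              (fun q' _ => abs_nonneg _) (Finset.mem_univ q)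
          _ ≤ T := by
            rw [hT]
            exact Finset.single_le_sum (f := fun p' => ∑ q' : Fin m, |(a p' q').toReal|)
              (fun p' _ => Finset.sum_nonneg fun q' _ => abs_nonneg _) (Finset.mem_univ p)
    have hbperm : ∀ σ : Equiv.Perm (Fin m), ∑ i : Fin m, b i (σ i) ≤ 0 := by
      intro σ
      by_cases hbot : ∃ i, a i (σ i) = ⊥
      · obtain ⟨i₀, h0⟩ := hbot
        have hsplit : ∑ i : Fin m, b i (σ i)
            = b i₀ (σ i₀) + ∑ i ∈ Finset.univ.erase i₀, b i (σ i) :=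
          (Finset.add_sum_erase _ _ (Finset.mem_univ i₀)).symm
        have h1 : b i₀ (σ i₀) = L := by simp only [hb]; rw [if_pos h0]
        have h2 : ∑ i ∈ Finset.univ.erase i₀, b i (σ i) ≤ (m : ℝ) * T := by
          calc ∑ i ∈ Finset.univ.erase i₀, b i (σ i)
              ≤ ∑ i ∈ Finset.univ.erase i₀, T :=
                Finset.sum_le_sum fun i _ => hbT i (σ i)
            _ = ((Finset.univ.erase i₀).card : ℝ) * T := by
                rw [Finset.sum_const, nsmul_eq_mul]
            _ ≤ (m : ℝ) * T := by
                apply mul_le_mul_of_nonneg_right _ hT0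
                have : (Finset.univ.erase i₀).card ≤ m := by
                  calc (Finset.univ.erase i₀).card ≤ Finset.univ.card :=
                    Finset.card_le_card (Finset.erase_subset _ _)
                  _ = m := by simp
                exact_mod_cast this
        rw [hsplit, h1, hL]
        linarith
      · push_neg at hbot
        have key : ∀ i, (b i (σ i) : EReal) = a i (σ i) := by
          intro i
          simp only [hb]
          rw [if_neg (hbot i), EReal.coe_toReal (htop i (σ i)) (hbot i)]
        have : ((∑ i : Fin m, b i (σ i) : ℝ) : EReal) ≤ 0 := by
          rw [Stmt13Aux.coe_fsum]
          calc ∑ i : Fin m, ((b i (σ i) : ℝ) : EReal)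
              = ∑ i : Fin m, a i (σ i) := Finset.sum_congr rfl fun i _ => key i
            _ ≤ 0 := hperm σ
        exact EReal.coe_nonpos.mp this
    obtain ⟨x, hx⟩ := Stmt13Aux.real_version hm b hbdiag hbperm
    refine ⟨x, fun i j _ => ?_⟩
    calc a j i ≤ ((b j i : ℝ) : EReal) := hble j i
      _ ≤ ((x j - x i : ℝ) : EReal) := by
        exact_mod_cast EReal.coe_le_coe_iff.mpr (hx i j)


/-- The non-strict system `a(j,i) ≤ x_j - x_i` is solvable iff every
permutation has nonpositive cost. -/
theorem stmt13 (m : ℕ) (hm : 1 ≤ m) (a : Fin m → Fin m → EReal)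
    (htop : ∀ i j, a i j ≠ ⊤) (hdiag : ∀ i, a i i = 0) :
    (∃ x : Fin m → ℝ, ∀ i j : Fin m, i ≠ j → a j i ≤ ((x j - x i : ℝ) : EReal)) ↔
    (∀ σ : Equiv.Perm (Fin m), ∑ i : Fin m, a i (σ i) ≤ 0) := by
  exact stmt13' m hm a htop hdiag
end
end

section
/- Let m ≥ 1 and let a : {1,…,m} × {1,…,m} → ℝ ∪ {−∞} (values in EReal, never +∞) satisfy a(i,i) = 0 for all i. Then there exists x : {1,…,m} → ℝ such that a(j,i) < x_j − x_i for all i ≠ j, if and only if for every permutation σ of {1,…,m} other than the identity, ∑_{i=1}^m a(i, σ(i)) < 0. -/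
open MeasureTheory Set RealInnerProductSpace
open scoped ENNReal

noncomputable section

namespace Stmt14Aux
open Finset

variable {m : ℕ}

def wt (B : Fin m → Fin m → ℝ) : List (Fin m) → ℝ
  | [] => 0
  | [_] => 0
  | a :: b :: t => B a b + wt B (b :: t)

lemma wt_nil (B : Fin m → Fin m → ℝ) : wt B [] = 0 := rfl
lemma wt_single (B : Fin m → Fin m → ℝ) (a : Fin m) : wt B [a] = 0 := rfl
lemma wt_cons_cons (B : Fin m → Fin m → ℝ) (a b : Fin m) (t : List (Fin m)) :
    wt B (a :: b :: t) = B a b + wt B (b :: t) := rfl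

lemma wt_append_cons (B : Fin m → Fin m → ℝ) (x : Fin m) (l2 : List (Fin m)) :
    ∀ l1, wt B (l1 ++ x :: l2) = wt B (l1 ++ [x]) + wt B (x :: l2)
  | [] => by simp [wt_single]
  | [a] => by simp [wt_cons_cons, wt_single]
  | a :: b :: t => by
      have ih := wt_append_cons B x l2 (b :: t)
      simp only [List.cons_append] at ih ⊢
      rw [wt_cons_cons, wt_cons_cons, ih]; ring

lemma wt_concat (B : Fin m → Fin m → ℝ) :
    ∀ (l : List (Fin m)) (h : l ≠ []) (x : Fin m),
      wt B (l ++ [x]) = wt B l + B (l.getLast h) x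
  | [], h, x => absurd rfl h
  | [a], _, x => by simp [wt_cons_cons, wt_single, wt_nil]
  | a :: b :: t, _, x => by
      have ih := wt_concat B (b :: t) (by simp) x
      simp only [List.cons_append] at ih ⊢
      rw [wt_cons_cons, wt_cons_cons, ih, List.getLast_cons (by simp : (b :: t) ≠ [])]
      ring

lemma wt_eq_sum (B : Fin m → Fin m → ℝ) (d : Fin m) :
    ∀ l : List (Fin m),
      wt B l = ∑ i ∈ Finset.range (l.length - 1), B (l.getD i d) (l.getD (i+1) d)
  | [] => by simp [wt_nil]
  | [a] => by simp [wt_single]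
  | a :: b :: t => by
      have ih := wt_eq_sum B d (b :: t)
      rw [wt_cons_cons, ih]
      have hlen : (a :: b :: t).length - 1 = ((b :: t).length - 1) + 1 := by simp
      rw [hlen, Finset.sum_range_succ']
      simp only [List.getD_cons_succ, List.getD_cons_zero]
      ring

lemma wt_le (B : Fin m → Fin m → ℝ) (C : ℝ) (hC : 0 ≤ C) (hB : ∀ i j, B i j ≤ C) :
    ∀ l : List (Fin m), wt B l ≤ l.length * C
  | [] => by simp [wt_nil]
  | [a] => by simp [wt_single, hC]
  | a :: b :: t => by
      have ih := wt_le B C hC hB (b :: t)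
      rw [wt_cons_cons]
      have := hB a b
      simp only [List.length_cons] at ih ⊢
      push_cast
      push_cast at ih
      nlinarith

lemma not_nodup_decomp {α : Type*} :
    ∀ (l : List α), ¬l.Nodup → ∃ y l1 l2 l3, l = l1 ++ y :: l2 ++ y :: l3
  | [], h => absurd List.nodup_nil h
  | a :: t, h => by
      by_cases ha : a ∈ t
      · obtain ⟨s, u, rfl⟩ := List.append_of_mem ha
        exact ⟨a, [], s, u, by simp⟩
      · have ht : ¬t.Nodup := fun hn => h (List.nodup_cons.mpr ⟨ha, hn⟩)
        obtain ⟨y, l1, l2, l3, rfl⟩ := not_nodup_decomp t ht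
        exact ⟨y, a :: l1, l2, l3, by simp⟩

lemma cycle_nonpos (B : Fin m → Fin m → ℝ) (hd : ∀ i, B i i = 0)
    (hp : ∀ σ : Equiv.Perm (Fin m), ∑ i : Fin m, B i (σ i) ≤ 0)
    (x : Fin m) (l : List (Fin m)) (hnd : (x :: l).Nodup) :
    wt B ((x :: l) ++ [x]) ≤ 0 := by
  set c := x :: l with hc
  have hn : 0 < c.length := by simp [hc]
  -- the permutation sum equals the indexed sum
  have h1 : ∑ i : Fin m, B i (c.formPerm i) = ∑ i ∈ c.toFinset, B i (c.formPerm i) := by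
    refine (Finset.sum_subset (Finset.subset_univ _) ?_).symm
    intro i _ hi
    rw [List.formPerm_apply_of_notMem (by simpa using hi), hd]
  have h2 : ∑ i ∈ c.toFinset, B i (c.formPerm i)
      = ∑ j ∈ Finset.range c.length,
          B (c.getD j x) (c.getD ((j+1) % c.length) x) := by
    refine (Finset.sum_bij (fun (j : ℕ) (hj : j ∈ Finset.range c.length) =>
        c.getD j x) ?_ ?_ ?_ ?_).symm
    · intro j hj
      simp only [Finset.mem_range] at hj
      rw [List.getD_eq_getElem _ _ hj]
      exact List.mem_toFinset.mpr (List.getElem_mem _)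
    · intro j1 hj1 j2 hj2 h
      simp only [Finset.mem_range] at hj1 hj2
      rw [List.getD_eq_getElem _ _ hj1, List.getD_eq_getElem _ _ hj2] at h
      exact (List.Nodup.getElem_inj_iff hnd).mp h
    · intro i hi
      obtain ⟨j, hj, hji⟩ := List.mem_iff_getElem.mp (List.mem_toFinset.mp hi)
      refine ⟨j, Finset.mem_range.mpr hj, ?_⟩
      rw [List.getD_eq_getElem _ _ hj, hji]
    · intro j hj
      simp only [Finset.mem_range] at hj
      have hmod : (j+1) % c.length < c.length := Nat.mod_lt _ hn
      rw [List.getD_eq_getElem _ _ hj, List.getD_eq_getElem _ _ hmod,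
        List.formPerm_apply_getElem _ hnd j hj]
  -- the walk weight equals the same indexed sum
  have h3 : wt B (c ++ [x]) = ∑ j ∈ Finset.range c.length,
      B (c.getD j x) (c.getD ((j+1) % c.length) x) := by
    rw [wt_eq_sum B x]
    have hlen : (c ++ [x]).length - 1 = c.length := by simp
    rw [hlen]
    refine Finset.sum_congr rfl ?_
    intro j hj
    simp only [Finset.mem_range] at hj
    have e1 : (c ++ [x]).getD j x = c.getD j x := by
      rw [List.getD_eq_getElem _ _ (by simp; omega : j < (c ++ [x]).length),
        List.getElem_append_left hj, List.getD_eq_getElem _ _ hj]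
    rw [e1]
    congr 1
    rcases Nat.lt_or_ge (j+1) c.length with hj1 | hj1
    · rw [List.getD_eq_getElem _ _ (by simp; omega : j + 1 < (c ++ [x]).length),
        List.getElem_append_left hj1, List.getD_eq_getElem _ _ (by
          rw [Nat.mod_eq_of_lt hj1]; exact hj1)]
      congr 1
      exact (Nat.mod_eq_of_lt hj1).symm
    · have hj2 : j + 1 = c.length := by omega
      have hmod : (j+1) % c.length = 0 := by rw [hj2, Nat.mod_self]
      rw [hmod]
      have e2 : (c ++ [x]).getD (j+1) x = x := by
        rw [hj2, List.getD_eq_getElem _ _ (by simp : c.length < (c ++ [x]).length)]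
        rw [List.getElem_append_right (le_refl c.length)]
        simp
      rw [e2, hc]
      simp
  calc wt B (c ++ [x]) = ∑ i : Fin m, B i (c.formPerm i) :=
        h3.trans (h2.symm.trans h1.symm)
    _ ≤ 0 := hp c.formPerm

lemma closed_walk_nonpos (B : Fin m → Fin m → ℝ) (hd : ∀ i, B i i = 0)
    (hp : ∀ σ : Equiv.Perm (Fin m), ∑ i : Fin m, B i (σ i) ≤ 0) :
    ∀ (n : ℕ) (l : List (Fin m)) (x : Fin m), l.length ≤ n →
      wt B ((x :: l) ++ [x]) ≤ 0 := by
  intro n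
  induction n with
  | zero =>
      intro l x hl
      have : l = [] := List.eq_nil_of_length_eq_zero (Nat.le_zero.mp hl)
      subst this
      simp [wt_cons_cons, wt_single, hd]
  | succ n ih =>
      intro l x hl
      by_cases hnd : (x :: l).Nodup
      · exact cycle_nonpos B hd hp x l hnd
      · obtain ⟨y, l1, l2, l3, heq⟩ := not_nodup_decomp (x :: l) hnd
        rcases l1 with _ | ⟨a, l1'⟩
        · -- x = y, l = l2 ++ y :: l3
          simp only [List.nil_append, List.cons.injEq] at heq
          obtain ⟨rfl, rfl⟩ := heq
          try simp only [List.append_eq] at hl hnd ⊢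
          have e : (x :: (l2 ++ x :: l3)) ++ [x] = (x :: l2) ++ x :: (l3 ++ [x]) := by
            simp
          rw [e, wt_append_cons B x (l3 ++ [x]) (x :: l2)]
          have h1 : wt B ((x :: l2) ++ [x]) ≤ 0 := ih l2 x (by
            simp only [List.length_append, List.length_cons] at hl ⊢; omega)
          have h2 : wt B (x :: (l3 ++ [x])) ≤ 0 := by
            have := ih l3 x (by
              simp only [List.length_append, List.length_cons] at hl ⊢; omega)
            simpa using this
          linarith
        · -- x = a, l = l1' ++ y :: l2 ++ y :: l3
          simp only [List.cons_append, List.cons.injEq] at heq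
          obtain ⟨rfl, rfl⟩ := heq
          try simp only [List.append_eq] at hl hnd ⊢
          have e : (x :: (l1' ++ y :: l2 ++ y :: l3)) ++ [x]
              = (x :: l1') ++ y :: ((l2 ++ [y]) ++ (l3 ++ [x])) := by simp
          rw [e, wt_append_cons B y ((l2 ++ [y]) ++ (l3 ++ [x])) (x :: l1')]
          have e2 : (y :: ((l2 ++ [y]) ++ (l3 ++ [x]))) = (y :: l2) ++ y :: (l3 ++ [x]) := by
            simp
          rw [e2, wt_append_cons B y (l3 ++ [x]) (y :: l2)]
          have hcyc : wt B ((y :: l2) ++ [y]) ≤ 0 := ih l2 y (by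
            simp only [List.length_append, List.length_cons] at hl ⊢; omega)
          have hrest : wt B ((x :: l1') ++ [y]) + wt B (y :: (l3 ++ [x])) ≤ 0 := by
            have e3 : (x :: (l1' ++ y :: l3)) ++ [x]
                = (x :: l1') ++ y :: (l3 ++ [x]) := by simp
            have := ih (l1' ++ y :: l3) x (by
              simp only [List.length_append, List.length_cons] at hl ⊢; omega)
            rw [e3, wt_append_cons B y (l3 ++ [x]) (x :: l1')] at this
            exact this
          linarith

lemma reduce_walk (B : Fin m → Fin m → ℝ) (hd : ∀ i, B i i = 0)
    (hp : ∀ σ : Equiv.Perm (Fin m), ∑ i : Fin m, B i (σ i) ≤ 0) :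
    ∀ (n : ℕ) (l : List (Fin m)), l ≠ [] → l.length ≤ n →
      ∃ l', l'.Nodup ∧ l' ≠ [] ∧ l'.getLast? = l.getLast? ∧ wt B l ≤ wt B l' := by
  intro n
  induction n with
  | zero =>
      intro l hne hl
      exact absurd (List.eq_nil_of_length_eq_zero (Nat.le_zero.mp hl)) hne
  | succ n ih =>
      intro l hne hl
      by_cases hnd : l.Nodup
      · exact ⟨l, hnd, hne, rfl, le_refl _⟩
      · obtain ⟨y, l1, l2, l3, heq⟩ := not_nodup_decomp l hnd
        have hw1 : wt B l = wt B (l1 ++ [y]) + wt B (y :: (l2 ++ y :: l3)) := by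
          rw [heq]
          have : l1 ++ y :: l2 ++ y :: l3 = l1 ++ y :: (l2 ++ y :: l3) := by simp
          rw [this, wt_append_cons B y (l2 ++ y :: l3) l1]
        have hw2 : wt B (y :: (l2 ++ y :: l3))
            = wt B ((y :: l2) ++ [y]) + wt B (y :: l3) := by
          have : y :: (l2 ++ y :: l3) = (y :: l2) ++ y :: l3 := by simp
          rw [this, wt_append_cons B y l3 (y :: l2)]
        have hcyc : wt B ((y :: l2) ++ [y]) ≤ 0 :=
          closed_walk_nonpos B hd hp l2.length l2 y le_rfl
        have hw3 : wt B (l1 ++ y :: l3) = wt B (l1 ++ [y]) + wt B (y :: l3) :=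
          wt_append_cons B y l3 l1
        have hlast : (l1 ++ y :: l3).getLast? = l.getLast? := by
          rw [heq]
          have : l1 ++ y :: l2 ++ y :: l3 = (l1 ++ y :: l2) ++ y :: l3 := by simp
          rw [this, List.getLast?_append_cons, List.getLast?_append_cons]
        obtain ⟨l', h1, h2, h3, h4⟩ := ih (l1 ++ y :: l3) (by simp) (by
          have : l.length = l1.length + l2.length + l3.length + 2 := by
            rw [heq]; simp; omega
          simp only [List.length_append, List.length_cons]
          omega)
        exact ⟨l', h1, h2, by rw [h3, hlast], by
          rw [hw1, hw2]
          linarith⟩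

lemma exists_potential (B : Fin m → Fin m → ℝ) (hd : ∀ i, B i i = 0)
    (hp : ∀ σ : Equiv.Perm (Fin m), ∑ i : Fin m, B i (σ i) ≤ 0) :
    ∃ x : Fin m → ℝ, ∀ i j, B i j ≤ x j - x i := by
  classical
  set C : ℝ := ∑ i : Fin m, ∑ j : Fin m, |B i j| with hC
  have hC0 : 0 ≤ C := Finset.sum_nonneg fun i _ =>
    Finset.sum_nonneg fun j _ => abs_nonneg _
  have hBC : ∀ i j, B i j ≤ C := by
    intro i j
    calc B i j ≤ |B i j| := le_abs_self _
      _ ≤ ∑ j' : Fin m, |B i j'| := Finset.single_le_sum (f := fun j' => |B i j'|)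
          (fun j' _ => abs_nonneg _) (Finset.mem_univ j)
      _ ≤ C := Finset.single_le_sum (f := fun i' => ∑ j' : Fin m, |B i' j'|)
          (fun i' _ => Finset.sum_nonneg fun j' _ => abs_nonneg _)
          (Finset.mem_univ i)
  set S : Fin m → Set ℝ := fun i =>
    (fun l => wt B l) '' {l : List (Fin m) | l.Nodup ∧ l ≠ [] ∧ l.getLast? = some i}
    with hS
  have hne : ∀ i, (S i).Nonempty := fun i =>
    ⟨wt B [i], ⟨[i], ⟨List.nodup_singleton i, List.cons_ne_nil i [], rfl⟩, rfl⟩⟩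
  have hbdd : ∀ i, BddAbove (S i) := by
    intro i
    refine ⟨m * C, ?_⟩
    rintro r ⟨l, ⟨hnd, -, -⟩, rfl⟩
    calc wt B l ≤ l.length * C := wt_le B C hC0 hBC l
      _ ≤ m * C := by
          have hlen : l.length ≤ m := by
            have := List.Nodup.length_le_card hnd
            simpa using this
          exact mul_le_mul_of_nonneg_right (by exact_mod_cast hlen) hC0
  refine ⟨fun i => sSup (S i), ?_⟩
  intro i j
  have key : ∀ r ∈ S i, r + B i j ≤ sSup (S j) := by
    rintro r ⟨l, ⟨hnd, hlne, hlast⟩, rfl⟩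
    have hgl : l.getLast hlne = i := by
      rw [List.getLast?_eq_getLast_of_ne_nil hlne] at hlast
      exact Option.some_injective _ hlast
    have hwc : wt B (l ++ [j]) = wt B l + B i j := by
      rw [wt_concat B l hlne j, hgl]
    obtain ⟨l', h1, h2, h3, h4⟩ := reduce_walk B hd hp (l ++ [j]).length (l ++ [j])
      (by simp) le_rfl
    have hl'mem : wt B l' ∈ S j := by
      refine ⟨l', ⟨h1, h2, ?_⟩, rfl⟩
      rw [h3, List.getLast?_append_cons]
      rfl
    calc wt B l + B i j = wt B (l ++ [j]) := hwc.symm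
      _ ≤ wt B l' := h4
      _ ≤ sSup (S j) := le_csSup (hbdd j) hl'mem
  have h1 : sSup (S i) ≤ sSup (S j) - B i j := by
    apply csSup_le (hne i)
    intro r hr
    linarith [key r hr]
  linarith

lemma ereal_coe_sum {α : Type*} (s : Finset α) (f : α → ℝ) :
    ((∑ i ∈ s, f i : ℝ) : EReal) = ∑ i ∈ s, (f i : EReal) := by
  induction s using Finset.cons_induction with
  | empty => simp
  | cons a s ha ihs => rw [Finset.sum_cons, Finset.sum_cons, EReal.coe_add, ihs]

end Stmt14Aux

/-- The strict system `a(j,i) < x_j - x_i` is solvable iff every non-identity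
permutation has negative cost. -/

theorem stmt14 (m : ℕ) (hm : 1 ≤ m) (a : Fin m → Fin m → EReal)
    (htop : ∀ i j, a i j ≠ ⊤) (hdiag : ∀ i, a i i = 0) :
    (∃ x : Fin m → ℝ, ∀ i j : Fin m, i ≠ j → a j i < ((x j - x i : ℝ) : EReal)) ↔
    (∀ σ : Equiv.Perm (Fin m), σ ≠ 1 → ∑ i : Fin m, a i (σ i) < 0) := by
  classical
  constructor
  · rintro ⟨x, hx⟩ σ hσ
    by_cases hbot : ∃ i0, a i0 (σ i0) = ⊥
    · obtain ⟨i0, hi0⟩ := hbot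
      rw [← Finset.add_sum_erase _ _ (Finset.mem_univ i0), hi0, EReal.bot_add]
      exact_mod_cast EReal.bot_lt_coe 0
    · push_neg at hbot
      have hcoe : ∀ i : Fin m, a i (σ i) = (((a i (σ i)).toReal : ℝ) : EReal) :=
        fun i => (EReal.coe_toReal (htop _ _) (hbot i)).symm
      have hsum : ∑ i : Fin m, a i (σ i)
          = ((∑ i : Fin m, (a i (σ i)).toReal : ℝ) : EReal) := by
        rw [Stmt14Aux.ereal_coe_sum]
        exact Finset.sum_congr rfl fun i _ => hcoe i
      rw [hsum]
      have hlt : ∑ i : Fin m, (a i (σ i)).toReal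
          < ∑ i : Fin m, (x i - x (σ i)) := by
        obtain ⟨i0, hi0⟩ : ∃ i0, σ i0 ≠ i0 := by
          by_contra h
          push_neg at h
          exact hσ (Equiv.ext h)
        have hterm : ∀ i : Fin m, σ i ≠ i →
            (a i (σ i)).toReal < x i - x (σ i) := by
          intro i hne
          have h := hx (σ i) i hne
          rw [hcoe i] at h
          exact_mod_cast h
        refine Finset.sum_lt_sum (fun i _ => ?_) ⟨i0, Finset.mem_univ i0,
          (hterm i0 hi0).le.lt_of_ne ?_⟩
        · by_cases hfix : σ i = i
          · rw [hfix, hdiag i, sub_self]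
            simp
          · exact (hterm i hfix).le
        · exact ne_of_lt (hterm i0 hi0)
      have hz : ∑ i : Fin m, (x i - x (σ i)) = 0 := by
        rw [Finset.sum_sub_distrib, Equiv.sum_comp σ x, sub_self]
      have : ∑ i : Fin m, (a i (σ i)).toReal < 0 := by linarith
      exact_mod_cast this
  · intro hneg
    set R : Fin m → Fin m → ℝ := fun i j => (a i j).toReal with hR
    have hR0 : ∀ i, R i i = 0 := fun i => by simp [hR, hdiag i]
    have hsum0 : 0 ≤ ∑ i : Fin m, ∑ j : Fin m, |R i j| :=
      Finset.sum_nonneg fun i _ => Finset.sum_nonneg fun j _ => abs_nonneg _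
    set C : ℝ := 1 + ∑ i : Fin m, ∑ j : Fin m, |R i j| with hCdef
    have hC1 : 1 ≤ C := by rw [hCdef]; linarith
    have hRC : ∀ i j, |R i j| ≤ C := by
      intro i j
      have h1 : |R i j| ≤ ∑ j' : Fin m, |R i j'| :=
        Finset.single_le_sum (f := fun j' => |R i j'|)
          (fun j' _ => abs_nonneg _) (Finset.mem_univ j)
      have h2 : ∑ j' : Fin m, |R i j'| ≤ ∑ i' : Fin m, ∑ j' : Fin m, |R i' j'| :=
        Finset.single_le_sum (f := fun i' => ∑ j' : Fin m, |R i' j'|)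
          (fun i' _ => Finset.sum_nonneg fun j' _ => abs_nonneg _)
          (Finset.mem_univ i)
      rw [hCdef]; linarith
    set T : Finset (Equiv.Perm (Fin m)) :=
      Finset.univ.filter (fun σ => σ ≠ 1 ∧ ∀ i, a i (σ i) ≠ ⊥) with hT
    have hTneg : ∀ σ ∈ T, 0 < -∑ i : Fin m, R i (σ i) := by
      intro σ hσ
      rw [hT, Finset.mem_filter] at hσ
      obtain ⟨-, hσ1, hσbot⟩ := hσ
      have hlt := hneg σ hσ1
      have hsum : ∑ i : Fin m, a i (σ i)
          = ((∑ i : Fin m, R i (σ i) : ℝ) : EReal) := by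
        rw [Stmt14Aux.ereal_coe_sum]
        exact Finset.sum_congr rfl fun i _ =>
          (EReal.coe_toReal (htop _ _) (hσbot i)).symm
      rw [hsum] at hlt
      have : ∑ i : Fin m, R i (σ i) < 0 := by exact_mod_cast hlt
      linarith
    have hm0 : (0:ℝ) < m := by exact_mod_cast hm
    set δ : ℝ := if h : T.Nonempty then
        (T.inf' h (fun σ => -∑ i : Fin m, R i (σ i))) / (2 * m) else 1 with hδdef
    have hδpos : 0 < δ := by
      rw [hδdef]
      split
      · next h =>
          apply div_pos
          · rw [Finset.lt_inf'_iff]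
            exact hTneg
          · linarith
      · exact one_pos
    have hδT : ∀ σ ∈ T, ∑ i : Fin m, R i (σ i) + m * δ ≤ 0 := by
      intro σ hσ
      have hTne : T.Nonempty := ⟨σ, hσ⟩
      set I : ℝ := T.inf' hTne (fun σ => -∑ i : Fin m, R i (σ i)) with hIdef
      have hinf : I ≤ -∑ i : Fin m, R i (σ i) := Finset.inf'_le _ hσ
      have hinfpos : 0 < I := by
        rw [hIdef, Finset.lt_inf'_iff]
        exact hTneg
      have hδeq : δ = I / (2 * m) := by rw [hδdef, dif_pos hTne]
      have hmδ : (m:ℝ) * δ = I / 2 := by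
        rw [hδeq]; field_simp
      rw [hmδ]
      linarith
    set L : ℝ := (m + 1) * (C + δ) with hLdef
    have hCδ : 0 ≤ C + δ := by linarith
    have hL0 : 0 ≤ L := by
      rw [hLdef]
      have : (0:ℝ) ≤ m + 1 := by linarith
      exact mul_nonneg this hCδ
    set N : Fin m → Fin m → ℝ := fun i j =>
      if i = j then 0 else if a i j = ⊥ then -L else R i j + δ with hNdef
    have hNle : ∀ i j, N i j ≤ C + δ := by
      intro i j
      rw [hNdef]
      dsimp only
      split
      · linarith
      · split
        · linarith
        · have h1 := hRC i j
          have h2 := le_abs_self (R i j)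
          linarith
    have hNdiag : ∀ i, N i i = 0 := fun i => by simp [hNdef]
    have hNlt : ∀ i j, i ≠ j → a i j < ((N i j : ℝ) : EReal) := by
      intro i j hij
      rw [hNdef]
      dsimp only
      rw [if_neg hij]
      by_cases hb : a i j = ⊥
      · rw [if_pos hb, hb]
        exact EReal.bot_lt_coe _
      · rw [if_neg hb]
        conv_lhs => rw [← EReal.coe_toReal (htop i j) hb]
        have : R i j < R i j + δ := by linarith
        exact_mod_cast this
    have hNperm : ∀ σ : Equiv.Perm (Fin m), ∑ i : Fin m, N i (σ i) ≤ 0 := by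
      intro σ
      by_cases hσ1 : σ = 1
      · subst hσ1
        simp [hNdiag]
      by_cases hbot : ∃ i0, a i0 (σ i0) = ⊥
      · obtain ⟨i0, hi0⟩ := hbot
        have hi0ne : i0 ≠ σ i0 := by
          intro h
          rw [← h, hdiag] at hi0
          exact absurd hi0 (by simp)
        have hterm : N i0 (σ i0) = -L := by
          rw [hNdef]
          dsimp only
          rw [if_neg hi0ne, if_pos hi0]
        rw [← Finset.add_sum_erase _ _ (Finset.mem_univ i0), hterm]
        have hrest : ∑ i ∈ Finset.univ.erase i0, N i (σ i)
            ≤ ((Finset.univ.erase i0).card : ℝ) * (C + δ) := by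
          have := Finset.sum_le_card_nsmul (Finset.univ.erase i0)
            (fun i => N i (σ i)) (C + δ) (fun i _ => hNle i (σ i))
          rwa [nsmul_eq_mul] at this
        have hcard : ((Finset.univ.erase i0).card : ℝ) ≤ m := by
          have h := Finset.card_erase_le (s := (Finset.univ : Finset (Fin m))) (a := i0)
          have : (Finset.univ : Finset (Fin m)).card = m := Finset.card_univ.trans (Fintype.card_fin m)
          have h2 : (Finset.univ.erase i0).card ≤ m := by omega
          exact_mod_cast h2
        have h3 : ∑ i ∈ Finset.univ.erase i0, N i (σ i) ≤ m * (C + δ) :=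
          hrest.trans (mul_le_mul_of_nonneg_right hcard hCδ)
        rw [hLdef]
        nlinarith
      · push_neg at hbot
        have hσT : σ ∈ T := by
          rw [hT, Finset.mem_filter]
          exact ⟨Finset.mem_univ _, hσ1, hbot⟩
        have hterm : ∀ i : Fin m, N i (σ i) = R i (σ i) + (if σ i = i then 0 else δ) := by
          intro i
          rw [hNdef]
          dsimp only
          by_cases hfix : i = σ i
          · rw [if_pos hfix, if_pos hfix.symm, ← hfix, hR0]
            ring
          · rw [if_neg hfix, if_neg (hbot i), if_neg (fun h : σ i = i => hfix h.symm)]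
        rw [Finset.sum_congr rfl (fun i _ => hterm i), Finset.sum_add_distrib]
        have h2 : ∑ i : Fin m, (if σ i = i then (0:ℝ) else δ) ≤ m * δ := by
          have h4 : ∀ i : Fin m, (if σ i = i then (0:ℝ) else δ) ≤ δ := by
            intro i
            split
            · linarith
            · exact le_refl δ
          calc ∑ i : Fin m, (if σ i = i then (0:ℝ) else δ)
              ≤ ∑ _i : Fin m, δ := Finset.sum_le_sum fun i _ => h4 i
            _ = m * δ := by rw [Finset.sum_const, Finset.card_univ, Fintype.card_fin, nsmul_eq_mul]
        have h5 := hδT σ hσT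
        linarith
    have hMperm : ∀ σ : Equiv.Perm (Fin m), ∑ i : Fin m, N (σ i) i ≤ 0 := by
      intro σ
      have he : ∑ i : Fin m, N (σ i) i = ∑ i : Fin m, N i (σ⁻¹ i) := by
        rw [← Equiv.sum_comp σ (fun i => N i (σ⁻¹ i))]
        simp
      rw [he]
      exact hNperm σ⁻¹
    obtain ⟨x, hx⟩ := Stmt14Aux.exists_potential (fun i j => N j i) (fun i => hNdiag i) hMperm
    refine ⟨x, fun i j hij => ?_⟩
    calc a j i < ((N j i : ℝ) : EReal) := hNlt j i (Ne.symm hij)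
      _ ≤ ((x j - x i : ℝ) : EReal) := by exact_mod_cast hx i j
end
end

section
/- Let k and m be positive integers and let f, g : {1,…,k} → {1,…,m} be functions such that for every i ∈ {1,…,m} the fibers have equal cardinality: #f⁻¹(i) = #g⁻¹(i). Then there exists a permutation σ of {1,…,k} such that f ∘ σ = g and f is injective on the support of every cycle of σ (that is, for every cycle c in the cycle decomposition of σ, f restricted to the support of c is injective). -/
open MeasureTheory Set RealInnerProductSpace
open scoped ENNReal

noncomputable section

section aux18

open Equiv Equiv.Perm

variable {α : Type*} [DecidableEq α] [Fintype α]

set_option linter.unusedSectionVars false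

private lemma aux18_pow_fix (σ : Perm α) {a : α} {t : ℕ} (h : (σ ^ t) a = a) :
    ∀ q : ℕ, (σ ^ (t * q)) a = a := by
  intro q
  induction q with
  | zero => simp
  | succ q ih =>
    have : t * (q + 1) = t * q + t := by ring
    rw [this, pow_add, Perm.mul_apply, h, ih]

private lemma aux18_pow_mod (σ : Perm α) {a : α} {t : ℕ} (h : (σ ^ t) a = a) (n : ℕ) :
    (σ ^ n) a = (σ ^ (n % t)) a := by
  conv_lhs => rw [← Nat.mod_add_div n t]
  rw [pow_add, Perm.mul_apply, aux18_pow_fix σ h (n / t)]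

private lemma aux18_sc_mono (σ : Perm α) {x y : α} (hxy : σ.SameCycle x y)
    {p q : α} (h : (σ * Equiv.swap x y).SameCycle p q) : σ.SameCycle p q := by
  set σ' := σ * Equiv.swap x y with hσ'
  have step : ∀ r : α, σ.SameCycle r (σ' r) := by
    intro r
    by_cases hrx : r = x
    · rw [hrx]
      have hx' : σ' x = σ y := by simp [hσ', Perm.mul_apply]
      rw [hx']
      exact hxy.trans ⟨1, by simp⟩
    · by_cases hry : r = y
      · rw [hry]
        have hy' : σ' y = σ x := by simp [hσ', Perm.mul_apply]
        rw [hy']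
        exact hxy.symm.trans ⟨1, by simp⟩
      · have : σ' r = σ r := by
          simp [hσ', Perm.mul_apply, Equiv.swap_apply_of_ne_of_ne hrx hry]
        rw [this]
        exact ⟨1, by simp⟩
  have claim : ∀ (n : ℕ) (r : α), σ.SameCycle r ((σ' ^ n) r) := by
    intro n
    induction n with
    | zero => intro r; exact ⟨0, by simp⟩
    | succ n ih =>
      intro r
      rw [pow_succ', Perm.mul_apply]
      exact (ih r).trans (step _)
  obtain ⟨n, -, rfl⟩ := h.exists_pow_eq'
  exact claim n p

private lemma aux18_not_sc (σ : Perm α) {a b : α} (hab : a ≠ b) (hsc : σ.SameCycle a b) :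
    ¬ (σ * Equiv.swap (σ⁻¹ a) (σ⁻¹ b)).SameCycle a b := by
  set x := σ⁻¹ a with hx
  set y := σ⁻¹ b with hy
  set σ' := σ * Equiv.swap x y with hσ'
  have hxy : x ≠ y := fun h => hab (by
    have := congrArg σ h
    simpa [hx, hy] using this)
  have hex : ∃ n : ℕ, 0 < n ∧ (σ ^ n) a = b := by
    obtain ⟨i, -, hi⟩ := hsc.exists_pow_eq'
    rcases Nat.eq_zero_or_pos i with h0 | h0
    · exact absurd (by simpa [h0] using hi) hab
    · exact ⟨i, h0, hi⟩
  classical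
  set d := Nat.find hex with hd
  obtain ⟨hdpos, hdb⟩ : 0 < d ∧ (σ ^ d) a = b := Nat.find_spec hex
  set S : Finset α := (Finset.range d).image (fun i => (σ ^ i) a) with hS
  have haS : a ∈ S := by
    simp only [hS, Finset.mem_image, Finset.mem_range]
    exact ⟨0, hdpos, by simp⟩
  have hbS : b ∉ S := by
    simp only [hS, Finset.mem_image, Finset.mem_range]
    rintro ⟨i, hi, hib⟩
    rcases Nat.eq_zero_or_pos i with h0 | h0
    · exact hab (by simpa [h0] using hib)
    · exact absurd hi (not_lt.mpr (Nat.find_le ⟨h0, hib⟩))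
  have hstep : ∀ p ∈ S, σ' p ∈ S := by
    intro p hp
    simp only [hS, Finset.mem_image, Finset.mem_range] at hp
    obtain ⟨i, hi, rfl⟩ := hp
    by_cases hpy : (σ ^ i) a = y
    · rw [hpy]
      have : σ' y = a := by simp [hσ', Perm.mul_apply, hx]
      rw [this]
      exact haS
    · by_cases hpx : (σ ^ i) a = x
      · exfalso
        have hper : (σ ^ (i + 1)) a = a := by
          rw [pow_succ', Perm.mul_apply, hpx, hx]; simp
        have hb' : (σ ^ (d % (i + 1))) a = b := by
          rw [← aux18_pow_mod σ hper d, hdb]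
        have hr1 : d % (i + 1) < i + 1 := Nat.mod_lt _ (Nat.succ_pos i)
        have hrd : d % (i + 1) < d := lt_of_lt_of_le hr1 (Nat.succ_le_of_lt hi)
        rcases Nat.eq_zero_or_pos (d % (i + 1)) with h0 | h0
        · exact hab (by simpa [h0] using hb')
        · exact absurd hrd (not_lt.mpr (Nat.find_le ⟨h0, hb'⟩))
      · have heq : σ' ((σ ^ i) a) = (σ ^ (i + 1)) a := by
          rw [hσ', Perm.mul_apply, Equiv.swap_apply_of_ne_of_ne hpx hpy,
            pow_succ', Perm.mul_apply]
        rw [heq]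
        rcases lt_or_eq_of_le (Nat.succ_le_of_lt hi) with h | h
        · simp only [hS, Finset.mem_image, Finset.mem_range]
          exact ⟨i + 1, h, rfl⟩
        · exfalso
          apply hpy
          have h' : i + 1 = d := h
          have hb1 : (σ ^ (i + 1)) a = b := by rw [h', hdb]
          rw [pow_succ', Perm.mul_apply] at hb1
          apply σ.injective
          rw [hb1, hy]; simp
  have hSinv : ∀ n : ℕ, (σ' ^ n) a ∈ S := by
    intro n
    induction n with
    | zero => simpa using haS
    | succ n ih =>
      rw [pow_succ', Perm.mul_apply]
      exact hstep _ ih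
  intro hcon
  obtain ⟨n, -, hn⟩ := hcon.exists_pow_eq'
  exact hbS (hn ▸ hSinv n)

end aux18


/-- If `f` and `g` have fibers of equal cardinality, then `g = f ∘ σ` for a
permutation `σ` such that `f` is injective on the support of every cycle of `σ`. -/
theorem stmt18 (k m : ℕ) (hk : 0 < k) (hm : 0 < m) (f g : Fin k → Fin m)
    (hfib : ∀ i : Fin m,
      (Finset.univ.filter fun j => f j = i).card =
        (Finset.univ.filter fun j => g j = i).card) :
    ∃ σ : Equiv.Perm (Fin k), f ∘ σ = g ∧
      ∀ c ∈ σ.cycleFactorsFinset, Set.InjOn f (c.support : Set (Fin k)) := by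
  classical
  -- an initial permutation with `f ∘ σ = g`, built from fiberwise equivalences
  have hcard : ∀ i : Fin m, Fintype.card {j // g j = i} = Fintype.card {j // f j = i} := by
    intro i
    rw [Fintype.card_subtype, Fintype.card_subtype]
    exact (hfib i).symm
  set e : ∀ i : Fin m, {j // g j = i} ≃ {j // f j = i} :=
    fun i => Fintype.equivOfCardEq (hcard i) with he
  have hne : ∃ σ : Equiv.Perm (Fin k), f ∘ σ = g :=
    ⟨Equiv.ofFiberEquiv e, funext fun j => Equiv.ofFiberEquiv_map e j⟩
  -- the number of "bad pairs"
  set N : Equiv.Perm (Fin k) → ℕ := fun σ =>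
    {p : Fin k × Fin k | p.1 ≠ p.2 ∧ σ.SameCycle p.1 p.2 ∧ f p.1 = f p.2}.ncard with hN
  set V : Set ℕ := {n | ∃ σ : Equiv.Perm (Fin k), f ∘ σ = g ∧ N σ = n} with hV
  have hVne : V.Nonempty := by
    obtain ⟨σ, hσ⟩ := hne
    exact ⟨N σ, σ, hσ, rfl⟩
  obtain ⟨σ, hσg, hσmin⟩ : ∃ σ : Equiv.Perm (Fin k), f ∘ σ = g ∧ N σ = sInf V :=
    Nat.sInf_mem hVne
  refine ⟨σ, hσg, ?_⟩
  intro c hc p hp q hq hfpq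
  by_contra hpq
  -- p ≠ q in the support of the cycle c, with f p = f q
  have hp' : p ∈ c.support := hp
  have hq' : q ∈ c.support := hq
  have hcyc : c = σ.cycleOf p := Equiv.Perm.cycle_is_cycleOf hp' hc
  have hsc : σ.SameCycle p q := by
    rw [hcyc] at hq'
    exact (Equiv.Perm.mem_support_cycleOf_iff.mp hq').1
  set x := σ⁻¹ p with hx
  set y := σ⁻¹ q with hy
  set σ' := σ * Equiv.swap x y with hσ'
  have hscxy : σ.SameCycle x y := by
    have h1 : σ.SameCycle x p := ⟨1, by simp [hx]⟩
    have h2 : σ.SameCycle q y := ⟨-1, by simp [hy]⟩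
    exact (h1.trans hsc).trans h2
  have hg' : f ∘ σ' = g := by
    funext j
    by_cases hjx : j = x
    · rw [hjx]
      have h1 : σ' x = q := by simp [hσ', Equiv.Perm.mul_apply, hy]
      calc f (σ' x) = f q := by rw [h1]
        _ = f p := hfpq.symm
        _ = f (σ x) := by simp [hx]
        _ = g x := congrFun hσg x
    · by_cases hjy : j = y
      · rw [hjy]
        have h1 : σ' y = p := by simp [hσ', Equiv.Perm.mul_apply, hx]
        calc f (σ' y) = f p := by rw [h1]
          _ = f q := hfpq
          _ = f (σ y) := by simp [hy]
          _ = g y := congrFun hσg y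
      · have h1 : σ' j = σ j := by
          simp [hσ', Equiv.Perm.mul_apply, Equiv.swap_apply_of_ne_of_ne hjx hjy]
        calc f (σ' j) = f (σ j) := by rw [h1]
          _ = g j := congrFun hσg j
  -- the set of bad pairs strictly decreases
  have hlt : N σ' < N σ := by
    apply Set.ncard_lt_ncard _ (Set.toFinite _)
    constructor
    · rintro ⟨u, v⟩ ⟨h1, h2, h3⟩
      exact ⟨h1, aux18_sc_mono σ hscxy h2, h3⟩
    · intro hcontra
      have hmem : (p, q) ∈ {r : Fin k × Fin k |
          r.1 ≠ r.2 ∧ σ.SameCycle r.1 r.2 ∧ f r.1 = f r.2} := ⟨hpq, hsc, hfpq⟩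
      obtain ⟨-, h2, -⟩ := hcontra hmem
      exact aux18_not_sc σ hpq hsc h2
  have : sInf V ≤ N σ' := Nat.sInf_le ⟨σ', hg', rfl⟩
  omega
end
end
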